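/- arXiv:1812.09699 — 7 statements merged into one kernel-verified Lean document; each statement's English description precedes it below -/
import Mathlib

section
/- Let f₁(z) := (1/(2π)) ∫_{-2}^{2} √(4 − y²)/(z − y) dy be the Stieltjes transform of Wigner's semicircle law. Then for every z ∈ ℂ with Im(z) > 0, the value f₁(z) satisfies the quadratic equation f₁(z)² − z·f₁(z) + 1 = 0, and moreover Im(f₁(z)) < 0. -/
/-! The substitution `y = 2 cos θ` turns the integral into `∫₀^π 4 sin² θ / (z - 2 cos θ) dθ`, and
dividing `4 - 4 cos² θ` by `z - 2 cos θ` leaves `π z + (4 - z²) ∫₀^π dθ / (z - 2 cos θ)`. Write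
`z = a + b` with `a b = 1` and `|b| < 1`. On the unit circle `u = e^{iθ}` one has
`z - 2 cos θ = -(u - a)(u - b) / u`, so the last integral is half of a contour integral of
`i / ((u - a)(u - b))`, which Cauchy's formula at the interior pole `b` evaluates to `π / (a - b)`.
As `4 - z² = -(a - b)²`, the integral equals `2π b`: thus `f₁(z) = b` is a root of `u² - z u + 1`,
and `Im b < 0` because `Im (b + b⁻¹) = Im z > 0` with `|b| < 1`. -/

open MeasureTheory Complex Metric intervalIntegral
open scoped Real

theorem one_lt_norm_of_mul_eq_one {𝕜 : Type*} [NormedDivisionRing 𝕜] {a b : 𝕜} (hab : a * b = 1)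
    (hb : ‖b‖ < 1) : 1 < ‖a‖ := by
  have h : ‖a‖ * ‖b‖ = 1 := by rw [← norm_mul, hab, norm_one]
  have hb0 : 0 < ‖b‖ := norm_pos_iff.2 (right_ne_zero_of_mul_eq_one hab)
  nlinarith

theorem sub_ne_zero_of_mul_eq_one {𝕜 : Type*} [NormedDivisionRing 𝕜] {a b : 𝕜} (hab : a * b = 1)
    (hb : ‖b‖ < 1) : a - b ≠ 0 :=
  sub_ne_zero.2 fun h => lt_asymm hb (h ▸ one_lt_norm_of_mul_eq_one hab hb)

theorem im_add_eq_zero_of_mul_eq_one {a b : ℂ} (hab : a * b = 1) (hb : ‖b‖ = 1) :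
    (a + b).im = 0 := by
  rw [eq_inv_of_mul_eq_one_left hab, inv_eq_conj hb]
  simp

theorem exists_mul_eq_one_add_eq_norm_lt_one {z : ℂ} (hz : z.im ≠ 0) :
    ∃ a b : ℂ, a * b = 1 ∧ a + b = z ∧ ‖b‖ < 1 := by
  obtain ⟨s, hs⟩ := IsAlgClosed.exists_pow_nat_eq (discrim 1 (-z) 1) two_pos
  obtain ⟨b, hb⟩ := exists_quadratic_eq_zero one_ne_zero ⟨s, by rw [← hs, sq]⟩
  have hab : (z - b) * b = 1 := by linear_combination -hb
  have hnorm : ‖z - b‖ * ‖b‖ = 1 := by rw [← norm_mul, hab, norm_one]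
  have hsum : z - b + b = z := sub_add_cancel z b
  rcases lt_trichotomy ‖b‖ 1 with h | h | h
  · exact ⟨z - b, b, hab, hsum, h⟩
  · exact absurd (hsum ▸ im_add_eq_zero_of_mul_eq_one hab h) hz
  · refine ⟨b, z - b, by rw [mul_comm, hab], by rw [add_comm, hsum], ?_⟩
    nlinarith [norm_nonneg (z - b)]

theorem im_neg_of_mul_eq_one {a b : ℂ} (hab : a * b = 1) (hb : ‖b‖ < 1)
    (hz : 0 < (a + b).im) : b.im < 0 := by
  have hb0 : 0 < normSq b := normSq_pos.2 (right_ne_zero_of_mul_eq_one hab)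
  have hb1 : normSq b < 1 := by
    rw [normSq_eq_norm_sq]; nlinarith [norm_nonneg b]
  have hinv : 1 < (normSq b)⁻¹ := (one_lt_inv₀ hb0).2 hb1
  have him : (a + b).im = b.im * (1 - (normSq b)⁻¹) := by
    rw [add_im, eq_inv_of_mul_eq_one_left hab, inv_im]
    ring
  nlinarith

section ChebyshevSubstitution

variable {E : Type*} [NormedAddCommGroup E] [NormedSpace ℝ E]

theorem integral_sqrt_four_sub_sq_smul (g : ℝ → E) :
    ∫ y in (-2)..2, √(4 - y ^ 2) • g y =
      ∫ θ in (0)..π, (4 * Real.sin θ ^ 2) • g (2 * Real.cos θ) := by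
  have hsubst := integral_deriv_smul_comp_of_deriv_nonpos (a := 0) (b := π)
    (f := fun θ => 2 * Real.cos θ) (f' := fun θ => -(2 * Real.sin θ))
    (g := fun y => √(4 - y ^ 2) • g y) (by fun_prop)
    (fun θ _ => by simpa using (Real.hasDerivAt_cos θ).const_mul 2)
    (fun θ hθ => by
      rw [min_eq_left Real.pi_pos.le, max_eq_right Real.pi_pos.le] at hθ
      simpa using (Real.sin_pos_of_pos_of_lt_pi hθ.1 hθ.2).le)
  norm_num at hsubst
  rw [integral_symm, ← hsubst, neg_neg]
  refine intervalIntegral.integral_congr fun θ hθ => ?_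
  rw [Set.uIcc_of_le Real.pi_pos.le] at hθ
  have hsin : 0 ≤ Real.sin θ := Real.sin_nonneg_of_mem_Icc hθ
  have hsqrt : √(4 - (2 * Real.cos θ) ^ 2) = 2 * Real.sin θ := by
    rw [← Real.sqrt_sq (by positivity : 0 ≤ 2 * Real.sin θ)]
    congr 1
    nlinarith [Real.sin_sq_add_cos_sq θ]
  simp only [hsqrt, smul_smul]
  ring_nf

theorem integral_comp_cos_zero_two_pi {h : ℝ → E} (hh : Continuous h) :
    ∫ θ in (0)..2 * π, h (Real.cos θ) = 2 • ∫ θ in (0)..π, h (Real.cos θ) := by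
  have hint : ∀ a b : ℝ, IntervalIntegrable (fun θ => h (Real.cos θ)) volume a b :=
    fun a b => (hh.comp Real.continuous_cos).intervalIntegrable a b
  have hreflect : ∫ θ in π..2 * π, h (Real.cos θ) = ∫ θ in (0)..π, h (Real.cos θ) := by
    have := integral_comp_sub_left (fun θ => h (Real.cos θ)) (2 * π) (a := 0) (b := π)
    simp only [Real.cos_two_pi_sub] at this
    rw [this, sub_zero, two_mul, add_sub_cancel_right]
  rw [← integral_add_adjacent_intervals (hint 0 π) (hint π (2 * π)), hreflect, two_nsmul]

end ChebyshevSubstitution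

theorem integral_inv_add_sub_two_cos {a b : ℂ} (hab : a * b = 1) (hb : ‖b‖ < 1) :
    ∫ θ in (0)..2 * π, (a + b - 2 * Real.cos θ)⁻¹ = 2 * π / (a - b) := by
  have ha : a ∉ closedBall (0 : ℂ) 1 := by
    simpa using one_lt_norm_of_mul_eq_one hab hb
  have hcauchy : (∮ u in C(0, 1), (u - b)⁻¹ • (u - a)⁻¹) = (2 * π * I) • (b - a)⁻¹ :=
    DifferentiableOn.circleIntegral_sub_inv_smul
      (fun u hu => ((differentiableAt_id.sub_const a).inv
        (sub_ne_zero.2 fun h => ha (h ▸ hu))).differentiableWithinAt)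
      (mem_ball_zero_iff.2 hb)
  have hab' : a - b ≠ 0 := sub_ne_zero_of_mul_eq_one hab hb
  calc ∫ θ in (0)..2 * π, (a + b - 2 * Real.cos θ)⁻¹
      = ∫ θ in (0)..2 * π, I * (deriv (circleMap 0 1) θ •
          ((circleMap 0 1 θ - b)⁻¹ • (circleMap 0 1 θ - a)⁻¹)) := by
        refine intervalIntegral.integral_congr fun θ _ => ?_
        set u := circleMap 0 1 θ with hu_def
        have hu : ‖u‖ = 1 := by simp [u]
        have hu0 : u ≠ 0 := by rintro h; simp [h] at hu
        have hua : u - a ≠ 0 := sub_ne_zero.2 fun h => ha (by simp [← h, hu])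
        have hub : u - b ≠ 0 := sub_ne_zero.2 fun h => hb.ne (h ▸ hu)
        have hcos : 2 * (Real.cos θ : ℂ) = u + u⁻¹ := by
          rw [ofReal_cos, two_cos, hu_def, circleMap_zero, neg_mul, exp_neg]
          simp
        have hden : a + b - (u + u⁻¹) = -((u - a) * (u - b)) / u := by
          field_simp
          linear_combination hab
        simp only [deriv_circleMap, smul_eq_mul, hcos, ← hu_def, hden, inv_div]
        field_simp
        exact I_sq.symm
    _ = I * ∮ u in C(0, 1), (u - b)⁻¹ • (u - a)⁻¹ := intervalIntegral.integral_const_mul _ _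
    _ = 2 * π / (a - b) := by
        rw [hcauchy, smul_eq_mul, ← neg_sub, inv_neg]
        field_simp
        linear_combination -I_sq

theorem integral_sqrt_four_sub_sq_div {a b : ℂ} (hab : a * b = 1) (hb : ‖b‖ < 1)
    (him : (a + b).im ≠ 0) :
    ∫ y in (-2)..2, (√(4 - y ^ 2) : ℂ) / (a + b - y) = 2 * π * b := by
  set z := a + b
  have hz : ∀ x : ℝ, z - 2 * x ≠ 0 := fun x h => him (by simpa using congrArg im h)
  have hcont : Continuous fun x : ℝ => (z - 2 * x)⁻¹ :=
    (continuous_const.sub (continuous_const.mul continuous_ofReal)).inv₀ hz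
  have hab' : a - b ≠ 0 := sub_ne_zero_of_mul_eq_one hab hb
  have hhalf : ∫ θ in (0)..π, (z - 2 * Real.cos θ)⁻¹ = π / (a - b) := by
    have h := (integral_comp_cos_zero_two_pi hcont).symm.trans
      (integral_inv_add_sub_two_cos hab hb)
    rw [two_nsmul] at h
    linear_combination h / 2
  have hlinear : ∫ θ in (0)..π, (z + 2 * Real.cos θ : ℂ) = π * z := by
    rw [intervalIntegral.integral_add, intervalIntegral.integral_const_mul,
      intervalIntegral.integral_ofReal, integral_cos]
    · simp
    all_goals exact Continuous.intervalIntegrable (by fun_prop) _ _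
  calc ∫ y in (-2)..2, (√(4 - y ^ 2) : ℂ) / (z - y)
      = ∫ y in (-2)..2, √(4 - y ^ 2) • (z - y)⁻¹ := by
        simp only [div_eq_mul_inv, real_smul]
    _ = ∫ θ in (0)..π, (4 * Real.sin θ ^ 2) • (z - 2 * Real.cos θ)⁻¹ := by
        simpa using integral_sqrt_four_sub_sq_smul fun y : ℝ => (z - y)⁻¹
    _ = ∫ θ in (0)..π, ((z + 2 * Real.cos θ) + (4 - z ^ 2) * (z - 2 * Real.cos θ)⁻¹) := by
        refine intervalIntegral.integral_congr fun θ _ => ?_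
        have hsin : (Real.sin θ : ℂ) ^ 2 = 1 - Real.cos θ ^ 2 := by
          norm_cast; rw [Real.sin_sq]
        have hdivide : 4 * (1 - (Real.cos θ : ℂ) ^ 2) =
            (z + 2 * Real.cos θ) * (z - 2 * Real.cos θ) + (4 - z ^ 2) := by ring
        rw [real_smul, ofReal_mul, ofReal_pow, hsin, ofReal_ofNat, hdivide, add_mul, mul_assoc,
          mul_inv_cancel₀ (hz _), mul_one]
    _ = π * z + (4 - z ^ 2) * (π / (a - b)) := by
        rw [intervalIntegral.integral_add, intervalIntegral.integral_const_mul, hlinear, hhalf]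
        · exact Continuous.intervalIntegrable (by fun_prop) _ _
        · exact (continuous_const.mul (hcont.comp Real.continuous_cos)).intervalIntegrable _ _
    _ = 2 * π * b := by
        field_simp
        linear_combination (-4) * hab

/-- The Stieltjes transform `f₁` of Wigner's semicircle law satisfies the quadratic
equation `f₁(z)² - z f₁(z) + 1 = 0` on the upper half plane, and there `Im f₁(z) < 0`. -/
theorem stmt1 (z : ℂ) (hz : 0 < z.im) (f₁ : ℂ)
    (hf : f₁ = (1 / (2 * Real.pi) : ℂ) *
      ∫ y in (-2 : ℝ)..2, (Real.sqrt (4 - y ^ 2) : ℂ) / (z - (y : ℂ))) :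
    f₁ ^ 2 - z * f₁ + 1 = 0 ∧ f₁.im < 0 := by
  obtain ⟨a, b, hab, rfl, hb⟩ := exists_mul_eq_one_add_eq_norm_lt_one hz.ne'
  have hf₁ : f₁ = b := by
    rw [hf, integral_sqrt_four_sub_sq_div hab hb hz.ne']
    field_simp
  subst hf₁
  exact ⟨by linear_combination -hab, im_neg_of_mul_eq_one hab hb hz⟩
end

section
/- Define ρ(x,t) := √((4t − x²)₊)/(2πt) for t > 0, and define u(x,t) := x/(2t) for |x| ≤ 2√t, u(x,t) := (x − √(x² − 4t))/(2t) for x > 2√t, and u(x,t) := (x + √(x² − 4t))/(2t) for x < −2√t. Then at every point (x,t) with t > 0 and |x| ≠ 2√t, the functions ρ and ρ·u are differentiable and satisfy the continuity equation ∂_t ρ(x,t) + ∂_x(ρ(x,t)·u(x,t)) = 0. -/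
open Filter Real
open scoped Topology

/-!
Since `√` vanishes on negative reals, `ρ(x,t) = √(4t - x²)/(2πt)` everywhere. Outside the
support `ρ` vanishes on a neighbourhood of `(x,t)`, so both derivatives are `0`. Inside,
`ρu = x√(4t - x²)/(4πt²)` near `(x,t)`, and with `S = √(4t - x²)` the two derivatives are
`(x² - 2t)/(2πt²S)` and `(2t - x²)/(2πt²S)`.
-/

lemma sqrt_max_zero (a : ℝ) : √(max a 0) = √a := by
  rcases le_total a 0 with ha | ha
  · rw [max_eq_right ha, sqrt_zero, sqrt_eq_zero'.2 ha]
  · rw [max_eq_left ha]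

section Semicircle

variable {x t : ℝ}

lemma sq_lt_four_mul_iff (ht : 0 ≤ t) : x ^ 2 < 4 * t ↔ |x| < 2 * √t := by
  rw [← abs_of_nonneg (by positivity : 0 ≤ 2 * √t), ← sq_lt_sq, mul_pow, sq_sqrt ht]
  norm_num

lemma four_mul_lt_sq_iff (ht : 0 ≤ t) : 4 * t < x ^ 2 ↔ 2 * √t < |x| := by
  rw [← abs_of_nonneg (by positivity : 0 ≤ 2 * √t), ← sq_lt_sq, mul_pow, sq_sqrt ht]
  norm_num

lemma hasDerivAt_semicircle_time (ht : 0 < t) (hx : x ^ 2 < 4 * t) :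
    HasDerivAt (fun s => √(4 * s - x ^ 2) / (2 * π * s))
      ((x ^ 2 - 2 * t) / (2 * π * t ^ 2 * √(4 * t - x ^ 2))) t := by
  have hD : 0 < 4 * t - x ^ 2 := by linarith
  have hS := sq_sqrt hD.le
  have hSpos := sqrt_pos.2 hD
  have hnum : HasDerivAt (fun s => 4 * s - x ^ 2) 4 t := by
    simpa using ((hasDerivAt_id t).const_mul 4).sub_const (x ^ 2)
  refine ((hnum.sqrt hD.ne').div ((hasDerivAt_id t).const_mul (2 * π)) (by positivity))
    |>.congr_deriv ?_
  rw [id]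
  field_simp
  linear_combination (-2) * hS

lemma hasDerivAt_semicircle_flux (ht : 0 < t) (hx : x ^ 2 < 4 * t) :
    HasDerivAt (fun y => √(4 * t - y ^ 2) / (2 * π * t) * (y / (2 * t)))
      ((2 * t - x ^ 2) / (2 * π * t ^ 2 * √(4 * t - x ^ 2))) x := by
  have hD : 0 < 4 * t - x ^ 2 := by linarith
  have hS := sq_sqrt hD.le
  have hSpos := sqrt_pos.2 hD
  have hnum : HasDerivAt (fun y => 4 * t - y ^ 2) (-(2 * x)) x := by
    simpa using (hasDerivAt_pow 2 x).const_sub (4 * t)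
  refine ((hnum.sqrt hD.ne').div_const (2 * π * t)).mul ((hasDerivAt_id x).div_const (2 * t))
    |>.congr_deriv ?_
  rw [id]
  field_simp
  linear_combination hS

end Semicircle

theorem stmt3_general (ρ u : ℝ → ℝ → ℝ)
    (hρ : ∀ x t : ℝ, ρ x t = Real.sqrt (max (4 * t - x ^ 2) 0) / (2 * Real.pi * t))
    (hu1 : ∀ x t : ℝ, 0 < t → |x| ≤ 2 * Real.sqrt t → u x t = x / (2 * t))
    (x t : ℝ) (ht : 0 < t) (hx : |x| ≠ 2 * Real.sqrt t) :
    ∃ a b : ℝ,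
      HasDerivAt (fun s => ρ x s) a t ∧
      HasDerivAt (fun y => ρ y t * u y t) b x ∧
      a + b = 0 := by
  have hρ' : ∀ y s, ρ y s = √(4 * s - y ^ 2) / (2 * π * s) := by
    simpa only [sqrt_max_zero] using hρ
  rcases hx.lt_or_gt with hin | hout
  · have hx2 : x ^ 2 < 4 * t := (sq_lt_four_mul_iff ht.le).2 hin
    have hflux : (fun y => √(4 * t - y ^ 2) / (2 * π * t) * (y / (2 * t))) =ᶠ[𝓝 x]
        fun y => ρ y t * u y t := by
      filter_upwards [(isOpen_lt continuous_abs continuous_const).mem_nhds hin] with y hy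
      rw [hρ', hu1 y t ht (le_of_lt hy)]
    refine ⟨_, _, by simpa only [hρ'] using hasDerivAt_semicircle_time ht hx2,
      (hasDerivAt_semicircle_flux ht hx2).congr_of_eventuallyEq hflux.symm, by ring⟩
  · have hx2 : 4 * t < x ^ 2 := (four_mul_lt_sq_iff ht.le).2 hout
    refine ⟨0, 0, (hasDerivAt_const t 0).congr_of_eventuallyEq ?_,
      (hasDerivAt_const x 0).congr_of_eventuallyEq ?_, add_zero 0⟩
    · filter_upwards [eventually_lt_nhds (show t < x ^ 2 / 4 by linarith)] with s hs
      rw [hρ', sqrt_eq_zero'.2 (by linarith), zero_div]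
    · filter_upwards [(isOpen_lt continuous_const continuous_abs).mem_nhds hout] with y hy
      have hy2 : 4 * t ≤ y ^ 2 := ((four_mul_lt_sq_iff ht.le).2 hy).le
      rw [hρ', sqrt_eq_zero'.2 (by linarith), zero_div, zero_mul]

/-- The self-similar semicircle profile `ρ(x,t) = √((4t - x²)₊)/(2πt)` together with the
explicit Hilbert transform `u = πHρ` satisfies the continuity equation
`∂ₜρ + ∂ₓ(ρu) = 0` pointwise away from the boundary of the support `|x| = 2√t`. -/
theorem stmt3 (ρ u : ℝ → ℝ → ℝ)
    (hρ : ∀ x t : ℝ, ρ x t = Real.sqrt (max (4 * t - x ^ 2) 0) / (2 * Real.pi * t))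
    (hu1 : ∀ x t : ℝ, 0 < t → |x| ≤ 2 * Real.sqrt t → u x t = x / (2 * t))
    (hu2 : ∀ x t : ℝ, 0 < t → 2 * Real.sqrt t < x →
      u x t = (x - Real.sqrt (x ^ 2 - 4 * t)) / (2 * t))
    (hu3 : ∀ x t : ℝ, 0 < t → x < -(2 * Real.sqrt t) →
      u x t = (x + Real.sqrt (x ^ 2 - 4 * t)) / (2 * t))
    (x t : ℝ) (ht : 0 < t) (hx : |x| ≠ 2 * Real.sqrt t) :
    ∃ a b : ℝ,
      HasDerivAt (fun s => ρ x s) a t ∧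
      HasDerivAt (fun y => ρ y t * u y t) b x ∧
      a + b = 0 :=
  stmt3_general ρ u hρ hu1 x t ht hx
end

section
/- Let γ > 0 and σ₀ > 0, and set σ(t) := (1 − (1 − γσ₀)e^{−2γt})/γ for t ≥ 0 (so σ(t) > 0). Define ρ(x,t) := √((2σ(t) − x²)₊)/(π σ(t)). Then: (i) for every t > 0 and every x with |x| < √(2σ(t)), setting u(x,t) := x/σ(t), the equation ∂_t ρ(x,t) + ∂_x(ρ(x,t)(u(x,t) − γx)) = 0 holds pointwise; (ii) for every x ∈ ℝ, ρ(x,t) → ρ_∞(x) := √((2γ − γ²x²)₊)/π as t → ∞. -/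
open Filter Real
open scoped Topology

/-!
On the support the semicircle profile is `√(2σ - x²)/(πσ)`, and a direct computation gives
`∂_σ ρ = (x² - σ)/(πσ²r)` and `∂_x (ρ · (1/σ - γ) x) = 2(1 - γσ)(σ - x²)/(πσ²r)` with
`r = √(2σ - x²)`. Hence the continuity equation holds along any variance path solving the
relaxation equation `σ' = 2(1 - γσ)`, of which the given `σ` is the explicit solution;
as `σ(t) → 1/γ`, continuity of the profile in `σ` gives the convergence to the equilibrium.
-/

noncomputable def semicircleProfile (s x : ℝ) : ℝ := √(max (2 * s - x ^ 2) 0) / (π * s)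

section SemicircleProfile

variable {s x : ℝ}

theorem semicircleProfile_eq_of_sq_lt (h : x ^ 2 < 2 * s) :
    semicircleProfile s x = √(2 * s - x ^ 2) / (π * s) := by
  rw [semicircleProfile, max_eq_left (by linarith)]

theorem hasDerivAt_semicircleProfile_variance (h : x ^ 2 < 2 * s) :
    HasDerivAt (fun s => semicircleProfile s x)
      ((x ^ 2 - s) / (π * s ^ 2 * √(2 * s - x ^ 2))) s := by
  have hs : 0 < s := by nlinarith [sq_nonneg x]
  have hr : 0 < √(2 * s - x ^ 2) := sqrt_pos.mpr (by linarith)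
  have hr2 : √(2 * s - x ^ 2) ^ 2 = 2 * s - x ^ 2 := sq_sqrt (by linarith)
  have hinterior : ∀ᶠ s' in 𝓝 s, x ^ 2 < 2 * s' :=
    (continuous_const.mul continuous_id).continuousAt.eventually (lt_mem_nhds h)
  have hsqrt := (((hasDerivAt_id' s).const_mul 2).sub_const (x ^ 2)).sqrt (sub_pos.mpr h).ne'
  refine ((hsqrt.div ((hasDerivAt_id' s).const_mul π) (by positivity)).congr_of_eventuallyEq
    (hinterior.mono fun s' hs' => semicircleProfile_eq_of_sq_lt hs')).congr_deriv ?_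
  field_simp
  linear_combination (-1) * hr2

theorem hasDerivAt_semicircleProfile_position (h : x ^ 2 < 2 * s) :
    HasDerivAt (semicircleProfile s) (-x / (π * s * √(2 * s - x ^ 2))) x := by
  have hs : 0 < s := by nlinarith [sq_nonneg x]
  have hr : 0 < √(2 * s - x ^ 2) := sqrt_pos.mpr (by linarith)
  have hinterior : ∀ᶠ y in 𝓝 x, y ^ 2 < 2 * s :=
    (continuous_pow 2).continuousAt.eventually (gt_mem_nhds h)
  have hsqrt := ((hasDerivAt_pow 2 x).const_sub (2 * s)).sqrt (by linarith)
  refine ((hsqrt.div_const (π * s)).congr_of_eventuallyEq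
    (hinterior.mono fun y hy => semicircleProfile_eq_of_sq_lt hy)).congr_deriv ?_
  field_simp
  ring

theorem continuousAt_semicircleProfile_variance (hs : s ≠ 0) :
    ContinuousAt (fun s => semicircleProfile s x) s := by
  unfold semicircleProfile
  exact ContinuousAt.div (by fun_prop) (by fun_prop) (mul_ne_zero pi_ne_zero hs)

theorem semicircleProfile_inv {γ : ℝ} (hγ : 0 < γ) (x : ℝ) :
    semicircleProfile γ⁻¹ x = √(max (2 * γ - γ ^ 2 * x ^ 2) 0) / π := by
  have hmax : max (2 * γ - γ ^ 2 * x ^ 2) 0 = γ ^ 2 * max (2 * γ⁻¹ - x ^ 2) 0 := by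
    rw [mul_max_of_nonneg _ _ (by positivity), mul_zero]
    field_simp
  rw [semicircleProfile, hmax, sqrt_mul (by positivity), sqrt_sq hγ.le]
  field_simp

end SemicircleProfile

theorem semicircleProfile_continuity_equation {γ t x : ℝ} {σ : ℝ → ℝ}
    (hσ : HasDerivAt σ (2 * (1 - γ * σ t)) t) (hx : x ^ 2 < 2 * σ t) :
    ∃ a b : ℝ,
      HasDerivAt (fun s => semicircleProfile (σ s) x) a t ∧
      HasDerivAt (fun y => semicircleProfile (σ t) y * (y / σ t - γ * y)) b x ∧
      a + b = 0 := by
  have hs : 0 < σ t := by nlinarith [sq_nonneg x]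
  have hr : 0 < √(2 * σ t - x ^ 2) := sqrt_pos.mpr (by linarith)
  have hr2 : √(2 * σ t - x ^ 2) ^ 2 = 2 * σ t - x ^ 2 := sq_sqrt (by linarith)
  have hvelocity : HasDerivAt (fun y => y / σ t - γ * y) (1 / σ t - γ * 1) x :=
    ((hasDerivAt_id' x).div_const (σ t)).sub ((hasDerivAt_id' x).const_mul γ)
  refine ⟨_, _, (hasDerivAt_semicircleProfile_variance hx).comp t hσ,
    (hasDerivAt_semicircleProfile_position hx).mul hvelocity, ?_⟩
  rw [semicircleProfile_eq_of_sq_lt hx]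
  generalize √(2 * σ t - x ^ 2) = r at hr hr2 ⊢
  field_simp
  linear_combination (1 - γ * σ t) * hr2

section Relaxation

variable {γ c : ℝ}

theorem hasDerivAt_relaxation (hγ : γ ≠ 0) (t : ℝ) :
    HasDerivAt (fun t => (1 - c * exp (-(2 * γ * t))) / γ)
      (2 * (1 - γ * ((1 - c * exp (-(2 * γ * t))) / γ))) t := by
  have hexp : HasDerivAt (fun t => exp (-(2 * γ * t))) (exp (-(2 * γ * t)) * -(2 * γ)) t := by
    simpa using ((hasDerivAt_id t).const_mul (2 * γ)).neg.exp
  refine ((hexp.const_mul c).const_sub 1 |>.div_const γ).congr_deriv ?_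
  field_simp
  ring

theorem tendsto_relaxation (hγ : 0 < γ) :
    Tendsto (fun t => (1 - c * exp (-(2 * γ * t))) / γ) atTop (𝓝 γ⁻¹) := by
  have hexp : Tendsto (fun t => exp (-(2 * γ * t))) atTop (𝓝 0) :=
    tendsto_exp_atBot.comp
      (tendsto_neg_atTop_atBot.comp (tendsto_id.const_mul_atTop (by positivity)))
  simpa using ((hexp.const_mul c).const_sub 1).div_const γ

end Relaxation

theorem stmt4_general (γ σ₀ : ℝ) (hγ : 0 < γ)
    (σ : ℝ → ℝ)
    (hσ : ∀ t : ℝ, σ t = (1 - (1 - γ * σ₀) * Real.exp (-(2 * γ * t))) / γ)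
    (ρ : ℝ → ℝ → ℝ)
    (hρ : ∀ x t : ℝ, ρ x t = Real.sqrt (max (2 * σ t - x ^ 2) 0) / (Real.pi * σ t)) :
    (∀ t : ℝ, 0 < t → ∀ x : ℝ, |x| < Real.sqrt (2 * σ t) →
      ∃ a b : ℝ,
        HasDerivAt (fun s => ρ x s) a t ∧
        HasDerivAt (fun y => ρ y t * (y / σ t - γ * y)) b x ∧
        a + b = 0) ∧
    (∀ x : ℝ, Tendsto (fun t => ρ x t) atTop
      (𝓝 (Real.sqrt (max (2 * γ - γ ^ 2 * x ^ 2) 0) / Real.pi))) := by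
  obtain rfl : ρ = fun x t => semicircleProfile (σ t) x := funext₂ hρ
  have hσ' : ∀ t, HasDerivAt σ (2 * (1 - γ * σ t)) t := by
    rw [funext hσ]
    exact hasDerivAt_relaxation hγ.ne'
  have hσlim : Tendsto σ atTop (𝓝 γ⁻¹) := by
    rw [funext hσ]
    exact tendsto_relaxation hγ
  refine ⟨fun t _ x hx => semicircleProfile_continuity_equation (hσ' t) ?_, fun x => ?_⟩
  · simpa using (lt_sqrt (abs_nonneg x)).mp hx
  · rw [← semicircleProfile_inv hγ]
    exact (continuousAt_semicircleProfile_variance (inv_ne_zero hγ.ne')).tendsto.comp hσlim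

/-- The explicit semicircle-profile solution of the Dyson equation with harmonic trap:
(i) the equation `∂ₜρ + ∂ₓ(ρ(u - γx)) = 0` holds pointwise in the interior of the support,
with `u(x,t) = x/σ(t)`; (ii) `ρ(x,t)` converges pointwise to the steady state as `t → ∞`. -/
theorem stmt4 (γ σ₀ : ℝ) (hγ : 0 < γ) (hσ₀ : 0 < σ₀)
    (σ : ℝ → ℝ)
    (hσ : ∀ t : ℝ, σ t = (1 - (1 - γ * σ₀) * Real.exp (-(2 * γ * t))) / γ)
    (ρ : ℝ → ℝ → ℝ)
    (hρ : ∀ x t : ℝ, ρ x t = Real.sqrt (max (2 * σ t - x ^ 2) 0) / (Real.pi * σ t)) :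
    (∀ t : ℝ, 0 < t → ∀ x : ℝ, |x| < Real.sqrt (2 * σ t) →
      ∃ a b : ℝ,
        HasDerivAt (fun s => ρ x s) a t ∧
        HasDerivAt (fun y => ρ y t * (y / σ t - γ * y)) b x ∧
        a + b = 0) ∧
    (∀ x : ℝ, Tendsto (fun t => ρ x t) atTop
      (𝓝 (Real.sqrt (max (2 * γ - γ ^ 2 * x ^ 2) 0) / Real.pi))) :=
  stmt4_general γ σ₀ hγ σ hσ ρ hρ
end

section
/- Let α > 0 and g ∈ C²(ℝ). On the half-plane D := {(ρ, m) ∈ ℝ² : ρ > 0} define η_g(ρ, m) := (1/(2√α)) ∫_{−√α}^{√α} ρ · g(m/ρ + ξρ) dξ. Then η_g is convex on D (as a function of the two variables (ρ, m) jointly) if and only if g is convex on ℝ. -/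
/-!
Write `s = √α` and, along a segment `t ↦ (ρ t, m t)` of the half plane, `u = m / ρ`. Then
`η_g = (1/2s) ∫_a^b g` with `a = u - sρ`, `b = u + sρ`. Since `u` is a ratio of affine functions,
`u'' ρ = -2 u' ρ'`, i.e. `a'' = b'' = (a'² - b'²) / (b - a)`, so that
`2s · (d/dt)² η_g = (g'(b) - D) b'² + (D - g'(a)) a'²` with `D` the slope of `g` over `[a, b]`;
for convex `g` both coefficients are nonnegative. Conversely, `η_g(ρ, ρu) / ρ` is the mean of `g`
over `[u - sρ, u + sρ]`, which is convex in `u` and tends to `g u` as `ρ → 0⁺`.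
-/

open MeasureTheory intervalIntegral Filter Set Topology

theorem convexOn_of_forall_convexOn_lineMap {E : Type*} [AddCommGroup E] [Module ℝ E]
    {s : Set E} {f : E → ℝ} (hs : Convex ℝ s)
    (h : ∀ x ∈ s, ∀ y ∈ s, ConvexOn ℝ (Icc (0 : ℝ) 1) (f ∘ AffineMap.lineMap (k := ℝ) x y)) :
    ConvexOn ℝ s f := by
  refine ⟨hs, fun x hx y hy a b ha hb hab => ?_⟩
  have := (h x hx y hy).2 (left_mem_Icc.2 zero_le_one) (right_mem_Icc.2 zero_le_one) ha hb hab
  have ha' : 1 - b = a := by linarith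
  simpa [AffineMap.lineMap_apply_module, ha'] using this

theorem ConvexOn.of_tendsto {ι E : Type*} [AddCommGroup E] [Module ℝ E] {l : Filter ι} [l.NeBot]
    {s : Set E} {F : ι → E → ℝ} {f : E → ℝ} (hF : ∀ᶠ i in l, ConvexOn ℝ s (F i))
    (hf : ∀ x ∈ s, Tendsto (fun i => F i x) l (𝓝 (f x))) : ConvexOn ℝ s f := by
  have hs : Convex ℝ s := hF.exists.choose_spec.1
  refine ⟨hs, fun x hx y hy a b ha hb hab => ?_⟩
  exact le_of_tendsto_of_tendsto (hf _ (hs hx hy ha hb hab))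
    (((hf x hx).const_smul a).add ((hf y hy).const_smul b))
    (hF.mono fun i hi => hi.2 hx hy ha hb hab)

theorem ConvexOn.deriv_mul_sq_sub_deriv_mul_sq_add_nonneg {g : ℝ → ℝ} (hg : ConvexOn ℝ univ g)
    (hd : Differentiable ℝ g) {a b a' b' w : ℝ} (hab : a < b)
    (hw : w * (b - a) = a' ^ 2 - b' ^ 2) :
    0 ≤ deriv g b * b' ^ 2 - deriv g a * a' ^ 2 + (g b - g a) * w := by
  have hlow : deriv g a * (b - a) ≤ g b - g a := by
    have := hg.deriv_le_slope (mem_univ _) (mem_univ _) hab (hd _)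
    rwa [slope_def_field, le_div_iff₀ (sub_pos.2 hab)] at this
  have hup : g b - g a ≤ deriv g b * (b - a) := by
    have := hg.slope_le_deriv (mem_univ _) (mem_univ _) hab (hd _)
    rwa [slope_def_field, div_le_iff₀ (sub_pos.2 hab)] at this
  have key : (b - a) * (deriv g b * b' ^ 2 - deriv g a * a' ^ 2 + (g b - g a) * w) =
      (deriv g b * (b - a) - (g b - g a)) * b' ^ 2
        + (g b - g a - deriv g a * (b - a)) * a' ^ 2 := by
    linear_combination (g b - g a) * hw
  refine nonneg_of_mul_nonneg_right ?_ (sub_pos.2 hab)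
  rw [key]
  have := sub_nonneg.2 hlow
  have := sub_nonneg.2 hup
  positivity

theorem ConvexOn.convexOn_intervalIntegral_of_hasDerivAt {g : ℝ → ℝ} (hg : ConvexOn ℝ univ g)
    (hd : Differentiable ℝ g) {D : Set ℝ} (hD : Convex ℝ D) {a b a' b' w : ℝ → ℝ}
    (hab : ∀ t ∈ D, a t < b t) (ha : ∀ t ∈ D, HasDerivAt a (a' t) t)
    (hb : ∀ t ∈ D, HasDerivAt b (b' t) t) (ha' : ∀ t ∈ D, HasDerivAt a' (w t) t)
    (hb' : ∀ t ∈ D, HasDerivAt b' (w t) t)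
    (hw : ∀ t ∈ D, w t * (b t - a t) = a' t ^ 2 - b' t ^ 2) :
    ConvexOn ℝ D (fun t => ∫ v in a t..b t, g v) := by
  set G : ℝ → ℝ := fun y => ∫ v in (0 : ℝ)..y, g v
  have hG : ∀ y, HasDerivAt G (g y) y := fun y =>
    integral_hasDerivAt_right (hd.continuous.intervalIntegrable _ _)
      (hd.continuous.stronglyMeasurableAtFilter _ _) hd.continuous.continuousAt
  have hφ : ∀ t ∈ D, HasDerivAt (fun t => G (b t) - G (a t)) (g (b t) * b' t - g (a t) * a' t) t :=
    fun t ht => ((hG _).comp t (hb t ht)).sub ((hG _).comp t (ha t ht))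
  have hφ' : ∀ t ∈ D, HasDerivAt (fun t => g (b t) * b' t - g (a t) * a' t)
      (deriv g (b t) * b' t ^ 2 - deriv g (a t) * a' t ^ 2 + (g (b t) - g (a t)) * w t) t :=
    fun t ht => ((((hd _).hasDerivAt.comp t (hb t ht)).mul (hb' t ht)).sub
      (((hd _).hasDerivAt.comp t (ha t ht)).mul (ha' t ht))).congr_deriv
        (by simp only [Function.comp_apply]; ring)
  have hcont : ContinuousOn (fun t => G (b t) - G (a t)) D := fun t ht =>
    (hφ t ht).continuousAt.continuousWithinAt
  refine (convexOn_of_hasDerivWithinAt2_nonneg hD hcont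
    (fun t ht => (hφ t (interior_subset ht)).hasDerivWithinAt)
    (fun t ht => (hφ' t (interior_subset ht)).hasDerivWithinAt)
    (fun t ht => hg.deriv_mul_sq_sub_deriv_mul_sq_add_nonneg hd (hab t (interior_subset ht))
      (hw t (interior_subset ht)))).congr fun t _ => ?_
  exact integral_interval_sub_left (hd.continuous.intervalIntegrable _ _)
    (hd.continuous.intervalIntegrable _ _)

theorem hasDerivAt_affine_div_affine {r₀ r₁ m₀ m₁ t : ℝ} (ht : r₀ + t * r₁ ≠ 0) :
    HasDerivAt (fun t => (m₀ + t * m₁) / (r₀ + t * r₁))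
      ((m₁ * r₀ - m₀ * r₁) / (r₀ + t * r₁) ^ 2) t := by
  have hm := ((hasDerivAt_id' t).mul_const m₁).const_add m₀
  have hr := ((hasDerivAt_id' t).mul_const r₁).const_add r₀
  exact (hm.div hr ht).congr_deriv (by ring)

theorem hasDerivAt_const_div_affine_sq (c : ℝ) {r₀ r₁ t : ℝ} (ht : r₀ + t * r₁ ≠ 0) :
    HasDerivAt (fun t => c / (r₀ + t * r₁) ^ 2) (-2 * c * r₁ / (r₀ + t * r₁) ^ 3) t := by
  have hr := (((hasDerivAt_id' t).mul_const r₁).const_add r₀).fun_pow 2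
  exact ((hasDerivAt_const t c).div hr (pow_ne_zero 2 ht)).congr_deriv (by field_simp; ring)

theorem convex_setOf_fst_pos : Convex ℝ {p : ℝ × ℝ | 0 < p.1} :=
  (convex_Ioi 0).linear_preimage (LinearMap.fst ℝ ℝ ℝ)

noncomputable def kineticEntropy (s : ℝ) (g : ℝ → ℝ) (p : ℝ × ℝ) : ℝ :=
  (1 / (2 * s)) * ∫ ξ in (-s)..s, p.1 * g (p.2 / p.1 + ξ * p.1)

section
variable {s : ℝ} {g : ℝ → ℝ}

theorem kineticEntropy_eq_intervalIntegral {p : ℝ × ℝ} (hp : p.1 ≠ 0) :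
    kineticEntropy s g p =
      (1 / (2 * s)) * ∫ v in (p.2 / p.1 - s * p.1)..(p.2 / p.1 + s * p.1), g v := by
  have hlin : ∀ ξ, p.2 / p.1 + ξ * p.1 = p.1 * ξ + p.2 / p.1 := fun ξ => by ring
  rw [kineticEntropy, intervalIntegral.integral_const_mul]
  simp only [hlin]
  rw [integral_comp_mul_add g hp, smul_eq_mul, mul_inv_cancel_left₀ hp]
  ring_nf

theorem kineticEntropy_mk_mul (u : ℝ) {ρ : ℝ} (hρ : ρ ≠ 0) :
    kineticEntropy s g (ρ, ρ * u) = ρ * ((1 / (2 * s)) * ∫ ξ in (-s)..s, g (u + ξ * ρ)) := by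
  simp only [kineticEntropy, mul_div_cancel_left₀ u hρ, intervalIntegral.integral_const_mul]
  ring

theorem convexOn_univ_of_convexOn_kineticEntropy (hs : 0 < s) (hg : Continuous g)
    (h : ConvexOn ℝ {p : ℝ × ℝ | 0 < p.1} (kineticEntropy s g)) : ConvexOn ℝ univ g := by
  refine ConvexOn.of_tendsto (l := 𝓝[>] 0)
    (F := fun ρ u => (1 / (2 * s)) * ∫ ξ in (-s)..s, g (u + ξ * ρ)) ?_ fun u _ => ?_
  · filter_upwards [self_mem_nhdsWithin] with ρ (hρ : 0 < ρ)
    have hline : ConvexOn ℝ univ fun u => kineticEntropy s g (ρ, ρ * u) := by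
      have hL : ∀ u : ℝ, AffineMap.lineMap (ρ, 0) (ρ, ρ) u = (ρ, ρ * u) := fun u => by
        simp only [AffineMap.lineMap_apply_module, Prod.smul_mk, smul_eq_mul, Prod.mk_add_mk]
        ext <;> ring
      have := (h.comp_affineMap (AffineMap.lineMap (ρ, 0) (ρ, ρ))).subset
        (fun u _ => by simpa [hL] using hρ) convex_univ
      simpa only [Function.comp_def, hL] using this
    refine (hline.smul (inv_nonneg.2 hρ.le)).congr fun u _ => ?_
    simp [kineticEntropy_mk_mul u hρ.ne', hρ.ne']
  · have hcont : Continuous fun ρ => (1 / (2 * s)) * ∫ ξ in (-s)..s, g (u + ξ * ρ) := by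
      fun_prop
    have h0 : (1 / (2 * s)) * ∫ ξ in (-s)..s, g (u + ξ * 0) = g u := by
      simp only [mul_zero, add_zero, intervalIntegral.integral_const, smul_eq_mul]
      field_simp
      ring
    simpa only [h0] using (hcont.tendsto 0).mono_left nhdsWithin_le_nhds

theorem ConvexOn.convexOn_kineticEntropy_comp_lineMap (hg : ConvexOn ℝ univ g)
    (hd : Differentiable ℝ g) (hs : 0 < s) {x y : ℝ × ℝ} (hx : 0 < x.1) (hy : 0 < y.1) :
    ConvexOn ℝ (Icc (0 : ℝ) 1) (kineticEntropy s g ∘ AffineMap.lineMap (k := ℝ) x y) := by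
  set dr := y.1 - x.1
  set dm := y.2 - x.2
  set c := dm * x.1 - x.2 * dr
  set r : ℝ → ℝ := fun t => x.1 + t * dr
  set u : ℝ → ℝ := fun t => (x.2 + t * dm) / r t
  have hline : ∀ t : ℝ, AffineMap.lineMap x y t = (r t, x.2 + t * dm) := fun t => by
    ext <;> simp [AffineMap.lineMap_apply_module, r, dr, dm] <;> ring
  have hr : ∀ t ∈ Icc (0 : ℝ) 1, 0 < r t := fun t ht => by
    simpa only [hline, mem_ofPred_eq] using convex_setOf_fst_pos.lineMap_mem hx hy ht
  have hrd : ∀ t, HasDerivAt r dr t := fun t =>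
    (((hasDerivAt_id' t).mul_const dr).const_add x.1).congr_deriv (one_mul dr)
  have hconv := hg.convexOn_intervalIntegral_of_hasDerivAt hd (convex_Icc 0 1)
    (a := fun t => u t - s * r t) (b := fun t => u t + s * r t)
    (a' := fun t => c / r t ^ 2 - s * dr) (b' := fun t => c / r t ^ 2 + s * dr)
    (w := fun t => -2 * c * dr / r t ^ 3)
    (fun t ht => by linarith [mul_pos hs (hr t ht)])
    (fun t ht => (hasDerivAt_affine_div_affine (hr t ht).ne').sub ((hrd t).const_mul s))
    (fun t ht => (hasDerivAt_affine_div_affine (hr t ht).ne').add ((hrd t).const_mul s))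
    (fun t ht => (hasDerivAt_const_div_affine_sq c (hr t ht).ne').sub_const _)
    (fun t ht => (hasDerivAt_const_div_affine_sq c (hr t ht).ne').add_const _)
    (fun t ht => by have := (hr t ht).ne'; field_simp; ring)
  refine (hconv.smul (by positivity : (0 : ℝ) ≤ 1 / (2 * s))).congr fun t ht => ?_
  simp only [Function.comp_apply, hline, smul_eq_mul, u,
    kineticEntropy_eq_intervalIntegral (p := (r t, _)) (hr t ht).ne']

theorem ConvexOn.convexOn_kineticEntropy (hg : ConvexOn ℝ univ g) (hd : Differentiable ℝ g)
    (hs : 0 < s) : ConvexOn ℝ {p : ℝ × ℝ | 0 < p.1} (kineticEntropy s g) :=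
  convexOn_of_forall_convexOn_lineMap convex_setOf_fst_pos fun _ hx _ hy =>
    hg.convexOn_kineticEntropy_comp_lineMap hd hs hx hy

end

/-- The kinetic entropy `η_g(ρ,m) = (1/(2√α)) ∫_{-√α}^{√α} ρ g(m/ρ + ξρ) dξ` is jointly
convex in `(ρ, m)` on the half plane `{ρ > 0}` if and only if `g` is convex on `ℝ`. -/
theorem stmt14 (α : ℝ) (hα : 0 < α) (g : ℝ → ℝ) (hg : ContDiff ℝ 2 g) :
    ConvexOn ℝ {p : ℝ × ℝ | 0 < p.1}
      (fun p : ℝ × ℝ => (1 / (2 * Real.sqrt α)) *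
        ∫ ξ in (-(Real.sqrt α))..(Real.sqrt α), p.1 * g (p.2 / p.1 + ξ * p.1)) ↔
    ConvexOn ℝ Set.univ g := by
  have hs : 0 < Real.sqrt α := Real.sqrt_pos.2 hα
  exact ⟨convexOn_univ_of_convexOn_kineticEntropy hs hg.continuous,
    fun h => h.convexOn_kineticEntropy (hg.differentiable (by norm_num)) hs⟩
end

section
/- Let α > 0 and ψ ∈ C²(ℝ). Define η_ψ(ρ, u) := (ψ(u + √α ρ) + ψ(u − √α ρ))/2 on ℝ². Then: (i) η_ψ is convex on ℝ² (as a function of (ρ, u) jointly) if and only if ψ is convex on ℝ; (ii) if φ ∈ C¹(ℝ) satisfies φ'(v) = v·ψ'(v) for all v, then q_ψ(ρ,u) := (φ(u + √α ρ) + φ(u − √α ρ))/2 satisfies the entropy-flux relations ∂_u q_ψ = ρ ∂_ρ η_ψ + u ∂_u η_ψ and ∂_ρ q_ψ = u ∂_ρ η_ψ + αρ ∂_u η_ψ at every (ρ,u) ∈ ℝ². -/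
/-!
Write `c = √α`, so that `η_ψ(ρ, u)` is the mean of `ψ` at the two characteristic points
`u ± cρ`. These points are linear functions of `(ρ, u)`, so convexity of `ψ` passes to `η_ψ`;
conversely, along the line `(ρ, u) = (x / 2c, x / 2)` the second point stays at `0` and
`η_ψ = (ψ x + ψ 0) / 2`. For (ii), with `ψ'± = ψ'(u ± cρ)` the chain rule gives
`∂_u η_ψ = (ψ'₊ + ψ'₋) / 2` and `∂_ρ η_ψ = c (ψ'₊ - ψ'₋) / 2`, and likewise for `q_ψ` with
`v ψ'(v)` in place of `ψ'`; the relations are then identities in `ψ'₊, ψ'₋`, using `c² = α`.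
-/

open Set

noncomputable def dAlembertMean (f : ℝ → ℝ) (c ρ u : ℝ) : ℝ :=
  (f (u + c * ρ) + f (u - c * ρ)) / 2

section Convexity

variable {f : ℝ → ℝ} {c : ℝ}

theorem convexOn_dAlembertMean (hf : ConvexOn ℝ univ f) (c : ℝ) :
    ConvexOn ℝ univ (fun p : ℝ × ℝ => dAlembertMean f c p.1 p.2) := by
  have hplus := hf.comp_linearMap (LinearMap.snd ℝ ℝ ℝ + c • LinearMap.fst ℝ ℝ ℝ)
  have hminus := hf.comp_linearMap (LinearMap.snd ℝ ℝ ℝ - c • LinearMap.fst ℝ ℝ ℝ)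
  rw [preimage_univ] at hplus hminus
  refine ((hplus.add hminus).smul (by norm_num : (0 : ℝ) ≤ 1 / 2)).congr fun p _ => ?_
  simp only [dAlembertMean, Pi.add_apply, Function.comp_apply, LinearMap.add_apply,
    LinearMap.sub_apply, LinearMap.smul_apply, LinearMap.fst_apply, LinearMap.snd_apply,
    smul_eq_mul]
  ring

theorem convexOn_of_convexOn_dAlembertMean (hc : c ≠ 0)
    (h : ConvexOn ℝ univ (fun p : ℝ × ℝ => dAlembertMean f c p.1 p.2)) :
    ConvexOn ℝ univ f := by
  have hline := h.comp_linearMap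
    (((2 * c)⁻¹ • LinearMap.id).prod ((2 : ℝ)⁻¹ • LinearMap.id))
  rw [preimage_univ] at hline
  refine ((hline.smul (by norm_num : (0 : ℝ) ≤ 2)).add_const (-f 0)).congr fun x _ => ?_
  have hx : x / 2 + c * (x / (2 * c)) = x := by field_simp; ring
  have h0 : x / 2 - c * (x / (2 * c)) = 0 := by field_simp; ring
  change 2 * dAlembertMean f c ((2 * c)⁻¹ * x) (2⁻¹ * x) + -f 0 = f x
  rw [dAlembertMean, ← div_eq_inv_mul, ← div_eq_inv_mul, hx, h0]
  ring

theorem convexOn_dAlembertMean_iff (hc : c ≠ 0) :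
    ConvexOn ℝ univ (fun p : ℝ × ℝ => dAlembertMean f c p.1 p.2) ↔ ConvexOn ℝ univ f :=
  ⟨convexOn_of_convexOn_dAlembertMean hc, fun hf => convexOn_dAlembertMean hf c⟩

end Convexity

def IsEntropyFluxPair (α : ℝ) (η q : ℝ → ℝ → ℝ) : Prop :=
  ∀ ρ u, deriv (q ρ ·) u = ρ * deriv (η · u) ρ + u * deriv (η ρ ·) u ∧
    deriv (q · u) ρ = u * deriv (η · u) ρ + α * ρ * deriv (η ρ ·) u

section EntropyFlux

variable {f f' : ℝ → ℝ} (c : ℝ)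

theorem hasDerivAt_dAlembertMean_snd (hf : ∀ x, HasDerivAt f (f' x) x) (ρ u : ℝ) :
    HasDerivAt (dAlembertMean f c ρ ·) (dAlembertMean f' c ρ u) u :=
  (((hf _).comp_add_const u (c * ρ)).add ((hf _).comp_sub_const u (c * ρ))).div_const 2

theorem hasDerivAt_dAlembertMean_fst (hf : ∀ x, HasDerivAt f (f' x) x) (ρ u : ℝ) :
    HasDerivAt (dAlembertMean f c · u) (c * (f' (u + c * ρ) - f' (u - c * ρ)) / 2) ρ := by
  have hplus := (hf (u + c * ρ)).comp ρ (((hasDerivAt_id ρ).const_mul c).const_add u)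
  have hminus := (hf (u - c * ρ)).comp ρ (((hasDerivAt_id ρ).const_mul c).const_sub u)
  exact ((hplus.add hminus).div_const 2).congr_deriv (by ring)

theorem isEntropyFluxPair_dAlembertMean {ψ φ : ℝ → ℝ} (hψ : Differentiable ℝ ψ)
    (hφ : ∀ v, HasDerivAt φ (v * deriv ψ v) v) :
    IsEntropyFluxPair (c ^ 2) (dAlembertMean ψ c) (dAlembertMean φ c) := by
  have hψ' : ∀ v, HasDerivAt ψ (deriv ψ v) v := fun v => (hψ v).hasDerivAt
  intro ρ u
  rw [(hasDerivAt_dAlembertMean_snd c hφ ρ u).deriv, (hasDerivAt_dAlembertMean_fst c hφ ρ u).deriv,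
    (hasDerivAt_dAlembertMean_snd c hψ' ρ u).deriv, (hasDerivAt_dAlembertMean_fst c hψ' ρ u).deriv]
  constructor <;>
  · simp only [dAlembertMean]
    ring

end EntropyFlux

/-- (i) `η_ψ(ρ,u) = (ψ(u+√αρ) + ψ(u-√αρ))/2` is jointly convex in `(ρ,u)` iff `ψ` is
convex; (ii) if `φ' (v) = v ψ'(v)` then `q_ψ(ρ,u) = (φ(u+√αρ) + φ(u-√αρ))/2` satisfies
the entropy-flux relations for the coupled Burgers system. -/
theorem stmt15 (α : ℝ) (hα : 0 < α) (ψ : ℝ → ℝ) (hψ : ContDiff ℝ 2 ψ) :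
    (ConvexOn ℝ Set.univ (fun p : ℝ × ℝ =>
        (ψ (p.2 + Real.sqrt α * p.1) + ψ (p.2 - Real.sqrt α * p.1)) / 2) ↔
      ConvexOn ℝ Set.univ ψ) ∧
    (∀ φ : ℝ → ℝ, (∀ v : ℝ, HasDerivAt φ (v * deriv ψ v) v) →
      ∀ r v : ℝ,
        deriv (fun w => (φ (w + Real.sqrt α * r) + φ (w - Real.sqrt α * r)) / 2) v =
          r * deriv (fun s =>
              (ψ (v + Real.sqrt α * s) + ψ (v - Real.sqrt α * s)) / 2) r +
            v * deriv (fun w =>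
              (ψ (w + Real.sqrt α * r) + ψ (w - Real.sqrt α * r)) / 2) v ∧
        deriv (fun s => (φ (v + Real.sqrt α * s) + φ (v - Real.sqrt α * s)) / 2) r =
          v * deriv (fun s =>
              (ψ (v + Real.sqrt α * s) + ψ (v - Real.sqrt α * s)) / 2) r +
            α * r * deriv (fun w =>
              (ψ (w + Real.sqrt α * r) + ψ (w - Real.sqrt α * r)) / 2) v) := by
  refine ⟨convexOn_dAlembertMean_iff (Real.sqrt_pos.mpr hα).ne', fun φ hφ => ?_⟩
  have hpair := isEntropyFluxPair_dAlembertMean (Real.sqrt α)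
    (hψ.differentiable (by norm_num)) hφ
  rwa [Real.sq_sqrt hα.le] at hpair
end

section
/- Let α > 0, let ψ₁, ψ₂ ∈ C²(ℝ) be convex, let k₁, k₂ ≥ 0 be real, and let φ₁, φ₂ ∈ C¹(ℝ) satisfy φᵢ'(v) = v·ψᵢ'(v) for all v ∈ ℝ (i = 1,2). Define η(ρ,u) := k₁ψ₁(u + √α ρ) + k₂ψ₂(u − √α ρ) and q(ρ,u) := k₁φ₁(u + √α ρ) + k₂φ₂(u − √α ρ). Then η is convex on ℝ² (jointly in (ρ,u)), and the entropy-flux relations ∂_u q = ρ ∂_ρ η + u ∂_u η and ∂_ρ q = u ∂_ρ η + αρ ∂_u η hold at every (ρ,u) ∈ ℝ². -/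
/-!
The Riemann invariants `u ± √α ρ` are linear in `(ρ, u)`, so `η` is a nonnegative combination
of convex functions composed with linear maps, hence convex. For a single invariant
`w = u + cρ` with `c² = α`, the pair `(ψ w, φ w)` has `∂_ρ = c ∂_u`, and
`φ'(w) = (u + cρ) ψ'(w)` gives both entropy–flux relations. These relations are linear in
`(η, q)`, so they pass to `k₁ (ψ₁, φ₁) + k₂ (ψ₂, φ₂)`, the second invariant taking `c = -√α`.
-/

open Set

theorem ConvexOn.comp_snd_add_mul_fst {ψ : ℝ → ℝ} (hψ : ConvexOn ℝ univ ψ) (c : ℝ) :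
    ConvexOn ℝ univ fun p : ℝ × ℝ => ψ (p.2 + c * p.1) :=
  hψ.comp_linearMap (LinearMap.snd ℝ ℝ ℝ + c • LinearMap.fst ℝ ℝ ℝ)

theorem HasDerivAt.comp_const_add_mul {f : ℝ → ℝ} {f' u c ρ : ℝ}
    (hf : HasDerivAt f f' (u + c * ρ)) : HasDerivAt (fun s => f (u + c * s)) (c * f') ρ := by
  have hlin : HasDerivAt (fun s => u + c * s) c ρ := by
    simpa using ((hasDerivAt_id' ρ).const_mul c).const_add u
  rw [mul_comm]
  exact hf.comp ρ hlin

/-- The first argument of `η` and `q` is `ρ`, the second `u`. -/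
structure IsEntropyPairAt (α : ℝ) (η q : ℝ → ℝ → ℝ) (ρ u : ℝ) : Prop where
  differentiableAt_fst : DifferentiableAt ℝ (η · u) ρ
  differentiableAt_snd : DifferentiableAt ℝ (η ρ ·) u
  flux_differentiableAt_fst : DifferentiableAt ℝ (q · u) ρ
  flux_differentiableAt_snd : DifferentiableAt ℝ (q ρ ·) u
  deriv_flux_snd : deriv (q ρ ·) u = ρ * deriv (η · u) ρ + u * deriv (η ρ ·) u
  deriv_flux_fst : deriv (q · u) ρ = u * deriv (η · u) ρ + α * ρ * deriv (η ρ ·) u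

namespace IsEntropyPairAt

variable {α ρ u : ℝ} {η q η' q' : ℝ → ℝ → ℝ}

theorem add (h : IsEntropyPairAt α η q ρ u) (h' : IsEntropyPairAt α η' q' ρ u) :
    IsEntropyPairAt α (fun ρ u => η ρ u + η' ρ u) (fun ρ u => q ρ u + q' ρ u) ρ u where
  differentiableAt_fst := h.differentiableAt_fst.add h'.differentiableAt_fst
  differentiableAt_snd := h.differentiableAt_snd.add h'.differentiableAt_snd
  flux_differentiableAt_fst := h.flux_differentiableAt_fst.add h'.flux_differentiableAt_fst
  flux_differentiableAt_snd := h.flux_differentiableAt_snd.add h'.flux_differentiableAt_snd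
  deriv_flux_snd := by
    rw [deriv_fun_add h.flux_differentiableAt_snd h'.flux_differentiableAt_snd,
      deriv_fun_add h.differentiableAt_fst h'.differentiableAt_fst,
      deriv_fun_add h.differentiableAt_snd h'.differentiableAt_snd,
      h.deriv_flux_snd, h'.deriv_flux_snd]
    ring
  deriv_flux_fst := by
    rw [deriv_fun_add h.flux_differentiableAt_fst h'.flux_differentiableAt_fst,
      deriv_fun_add h.differentiableAt_fst h'.differentiableAt_fst,
      deriv_fun_add h.differentiableAt_snd h'.differentiableAt_snd,
      h.deriv_flux_fst, h'.deriv_flux_fst]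
    ring

theorem const_mul (h : IsEntropyPairAt α η q ρ u) (k : ℝ) :
    IsEntropyPairAt α (fun ρ u => k * η ρ u) (fun ρ u => k * q ρ u) ρ u where
  differentiableAt_fst := h.differentiableAt_fst.const_mul k
  differentiableAt_snd := h.differentiableAt_snd.const_mul k
  flux_differentiableAt_fst := h.flux_differentiableAt_fst.const_mul k
  flux_differentiableAt_snd := h.flux_differentiableAt_snd.const_mul k
  deriv_flux_snd := by
    rw [deriv_const_mul k h.flux_differentiableAt_snd, deriv_const_mul k h.differentiableAt_fst,
      deriv_const_mul k h.differentiableAt_snd, h.deriv_flux_snd]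
    ring
  deriv_flux_fst := by
    rw [deriv_const_mul k h.flux_differentiableAt_fst, deriv_const_mul k h.differentiableAt_fst,
      deriv_const_mul k h.differentiableAt_snd, h.deriv_flux_fst]
    ring

end IsEntropyPairAt

theorem isEntropyPairAt_comp_snd_add_mul_fst {α c : ℝ} (hc : c * c = α) {ψ φ : ℝ → ℝ} {ρ u : ℝ}
    (hψ : DifferentiableAt ℝ ψ (u + c * ρ))
    (hφ : HasDerivAt φ ((u + c * ρ) * deriv ψ (u + c * ρ)) (u + c * ρ)) :
    IsEntropyPairAt α (fun ρ u => ψ (u + c * ρ)) (fun ρ u => φ (u + c * ρ)) ρ u := by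
  have hηρ := hψ.hasDerivAt.comp_const_add_mul
  have hηu := hψ.hasDerivAt.comp_add_const u (c * ρ)
  have hqρ := hφ.comp_const_add_mul
  have hqu := hφ.comp_add_const u (c * ρ)
  refine ⟨hηρ.differentiableAt, hηu.differentiableAt, hqρ.differentiableAt, hqu.differentiableAt,
    ?_, ?_⟩
  · rw [hηρ.deriv, hηu.deriv, hqu.deriv]
    ring
  · rw [hηρ.deriv, hηu.deriv, hqρ.deriv, ← hc]
    ring

/-- The entropy `η = k₁ψ₁(u+√αρ) + k₂ψ₂(u-√αρ)` with `ψᵢ` convex and `kᵢ ≥ 0` is jointly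
convex in `(ρ,u)`, and together with `q = k₁φ₁(u+√αρ) + k₂φ₂(u-√αρ)` (where
`φᵢ'(v) = vψᵢ'(v)`) it satisfies the entropy-flux relations of the coupled Burgers
system. -/
theorem stmt16 (α : ℝ) (hα : 0 < α) (ψ₁ ψ₂ φ₁ φ₂ : ℝ → ℝ)
    (hψ₁ : ContDiff ℝ 2 ψ₁) (hψ₂ : ContDiff ℝ 2 ψ₂)
    (hc₁ : ConvexOn ℝ Set.univ ψ₁) (hc₂ : ConvexOn ℝ Set.univ ψ₂)
    (k₁ k₂ : ℝ) (hk₁ : 0 ≤ k₁) (hk₂ : 0 ≤ k₂)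
    (hφ₁ : ∀ v : ℝ, HasDerivAt φ₁ (v * deriv ψ₁ v) v)
    (hφ₂ : ∀ v : ℝ, HasDerivAt φ₂ (v * deriv ψ₂ v) v) :
    ConvexOn ℝ Set.univ (fun p : ℝ × ℝ =>
      k₁ * ψ₁ (p.2 + Real.sqrt α * p.1) + k₂ * ψ₂ (p.2 - Real.sqrt α * p.1)) ∧
    ∀ r v : ℝ,
      deriv (fun w =>
          k₁ * φ₁ (w + Real.sqrt α * r) + k₂ * φ₂ (w - Real.sqrt α * r)) v =
        r * deriv (fun s =>
            k₁ * ψ₁ (v + Real.sqrt α * s) + k₂ * ψ₂ (v - Real.sqrt α * s)) r +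
          v * deriv (fun w =>
            k₁ * ψ₁ (w + Real.sqrt α * r) + k₂ * ψ₂ (w - Real.sqrt α * r)) v ∧
      deriv (fun s =>
          k₁ * φ₁ (v + Real.sqrt α * s) + k₂ * φ₂ (v - Real.sqrt α * s)) r =
        v * deriv (fun s =>
            k₁ * ψ₁ (v + Real.sqrt α * s) + k₂ * ψ₂ (v - Real.sqrt α * s)) r +
          α * r * deriv (fun w =>
            k₁ * ψ₁ (w + Real.sqrt α * r) + k₂ * ψ₂ (w - Real.sqrt α * r)) v := by
  set c := Real.sqrt α
  have hc : c * c = α := Real.mul_self_sqrt hα.le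
  refine ⟨?_, fun r v => ?_⟩
  · have h₂ := hc₂.comp_snd_add_mul_fst (-c)
    simp only [neg_mul, ← sub_eq_add_neg] at h₂
    exact ((hc₁.comp_snd_add_mul_fst c).smul hk₁).add (h₂.smul hk₂)
  · have h₁ := isEntropyPairAt_comp_snd_add_mul_fst hc (ρ := r) (u := v)
      (hψ₁.differentiable two_ne_zero _) (hφ₁ _)
    have h₂ := isEntropyPairAt_comp_snd_add_mul_fst (neg_mul_neg c c ▸ hc) (ρ := r) (u := v)
      (hψ₂.differentiable two_ne_zero _) (hφ₂ _)
    simp only [neg_mul, ← sub_eq_add_neg] at h₂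
    have h := (h₁.const_mul k₁).add (h₂.const_mul k₂)
    exact ⟨h.deriv_flux_snd, h.deriv_flux_fst⟩
end

section
/- Let ρ₀ : ℝ → ℝ be continuous, bounded, integrable, with ρ₀(x) > 0 for all x ∈ ℝ, and assume that its conjugate Poisson extension Rρ₀(x,y) := (1/π) ∫_ℝ (x − s)/((x − s)² + y²) · ρ₀(s) ds is bounded on ℝ × (0,∞). Let Pρ₀(x,y) := (1/π) ∫_ℝ y/((x − s)² + y²) · ρ₀(s) ds be the Poisson extension. Let γ > 0, t₀ > 0, and set a := e^{−γ t₀} and b := (π/γ)·sinh(γ t₀). Then for every (Z₁, Z₂) ∈ ℝ × [0,∞) there exists a unique pair (x, y) ∈ ℝ × (0,∞) such that Z₁ = a·x + b·Rρ₀(x, y) and Z₂ = a·y − b·Pρ₀(x, y). -/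
open MeasureTheory Complex Set Filter Topology Metric

namespace Stmt19Aux

/-- The Cauchy transform (times π) of `ρ₀`. -/
noncomputable def cau (ρ₀ : ℝ → ℝ) (w : ℂ) : ℂ := ∫ s : ℝ, (ρ₀ s : ℂ) / (w - s)

/-- The forward characteristic map. -/
noncomputable def Zm (ρ₀ : ℝ → ℝ) (a c : ℝ) (w : ℂ) : ℂ := (a : ℂ) * w + (c : ℂ) * cau ρ₀ w

variable {ρ₀ : ℝ → ℝ}

lemma sub_ne_zero_of_im {w : ℂ} (hw : 0 < w.im) (s : ℝ) : w - (s : ℂ) ≠ 0 := by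
  intro h
  have : (w - (s:ℂ)).im = 0 := by rw [h]; simp
  simp [Complex.sub_im] at this
  exact absurd this hw.ne'

lemma norm_sub_ge (w : ℂ) (s : ℝ) : w.im ≤ ‖w - s‖ := by
  have h := Complex.abs_im_le_norm (w - s)
  simpa [Complex.sub_im] using (le_trans (le_abs_self _) h)

lemma continuous_ker (hc : Continuous ρ₀) {w : ℂ} (hw : 0 < w.im) :
    Continuous (fun s : ℝ => (ρ₀ s : ℂ) / (w - s)) := by
  apply Continuous.div
  · exact Complex.continuous_ofReal.comp hc
  · exact continuous_const.sub Complex.continuous_ofReal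
  · exact fun s => sub_ne_zero_of_im hw s

lemma norm_ker_le {w : ℂ} (hw : 0 < w.im) (s : ℝ) :
    ‖(ρ₀ s : ℂ) / (w - s)‖ ≤ ‖ρ₀ s‖ / w.im := by
  rw [norm_div, Complex.norm_real]
  exact div_le_div_of_nonneg_left (norm_nonneg _) hw (norm_sub_ge w s)

lemma integrable_ker (hc : Continuous ρ₀) (hi : Integrable ρ₀) {w : ℂ} (hw : 0 < w.im) :
    Integrable (fun s : ℝ => (ρ₀ s : ℂ) / (w - s)) := by
  refine Integrable.mono' (hi.norm.div_const w.im) ((continuous_ker hc hw).aestronglyMeasurable) ?_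
  filter_upwards with s using norm_ker_le hw s

lemma ker_re {w : ℂ} (s : ℝ) (h : w - (s:ℂ) ≠ 0) :
    ((ρ₀ s : ℂ) / (w - s)).re = (w.re - s) / ((w.re - s) ^ 2 + w.im ^ 2) * ρ₀ s := by
  have hn : Complex.normSq (w - s) ≠ 0 := by
    simpa [Complex.normSq_eq_zero] using h
  rw [Complex.div_re]
  simp only [Complex.normSq_apply, Complex.sub_re, Complex.sub_im, Complex.ofReal_re,
    Complex.ofReal_im]
  field_simp
  ring

lemma ker_im {w : ℂ} (s : ℝ) (h : w - (s:ℂ) ≠ 0) :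
    ((ρ₀ s : ℂ) / (w - s)).im = -(w.im / ((w.re - s) ^ 2 + w.im ^ 2) * ρ₀ s) := by
  have hn : Complex.normSq (w - s) ≠ 0 := by
    simpa [Complex.normSq_eq_zero] using h
  rw [Complex.div_im]
  simp only [Complex.normSq_apply, Complex.sub_re, Complex.sub_im, Complex.ofReal_re,
    Complex.ofReal_im]
  field_simp
  ring

lemma cau_re {w : ℂ} (hki : Integrable (fun s : ℝ => (ρ₀ s : ℂ) / (w - s))) (hw : 0 < w.im) :
    (cau ρ₀ w).re = ∫ s : ℝ, (w.re - s) / ((w.re - s) ^ 2 + w.im ^ 2) * ρ₀ s := by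
  have h := integral_re hki
  simp only [RCLike.re_to_complex] at h
  rw [cau, ← h]
  refine integral_congr_ae (Filter.Eventually.of_forall fun s => ?_)
  simpa using ker_re s (sub_ne_zero_of_im hw s)

lemma cau_im {w : ℂ} (hki : Integrable (fun s : ℝ => (ρ₀ s : ℂ) / (w - s))) (hw : 0 < w.im) :
    (cau ρ₀ w).im = -∫ s : ℝ, w.im / ((w.re - s) ^ 2 + w.im ^ 2) * ρ₀ s := by
  have h := integral_im hki
  simp only [RCLike.im_to_complex] at h
  rw [cau, ← h, ← integral_neg]
  refine integral_congr_ae (Filter.Eventually.of_forall fun s => ?_)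
  simpa using ker_im s (sub_ne_zero_of_im hw s)

/-! ### Substitution lemmas for the Poisson kernel -/

lemma poisson_sub (ρ : ℝ → ℝ) (x y : ℝ) (hy : 0 < y) :
    ∫ s : ℝ, y / ((x - s) ^ 2 + y ^ 2) * ρ s
      = ∫ u : ℝ, ρ (x - y * u) * (1 + u ^ 2)⁻¹ := by
  set F : ℝ → ℝ := fun t => y / (t ^ 2 + y ^ 2) * ρ (x - t) with hF
  have h1 : ∫ s : ℝ, y / ((x - s) ^ 2 + y ^ 2) * ρ s = ∫ t : ℝ, F t := by
    rw [← integral_sub_left_eq_self F volume x]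
    congr 1; ext s; simp [hF]
  have h2 := MeasureTheory.Measure.integral_comp_mul_left F y
  have h3 : ∀ u : ℝ, F (y * u) = y⁻¹ * (ρ (x - y * u) * (1 + u ^ 2)⁻¹) := by
    intro u
    simp only [hF]
    rw [mul_pow]
    field_simp
    ring
  have h4 : ∫ u : ℝ, F (y * u) = y⁻¹ * ∫ u : ℝ, ρ (x - y * u) * (1 + u ^ 2)⁻¹ := by
    simp_rw [h3]
    exact integral_const_mul _ _
  rw [h4] at h2
  rw [h1, abs_of_pos (inv_pos.mpr hy)] at *
  have := h2.symm
  rw [smul_eq_mul] at this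
  field_simp at this ⊢
  linarith [this]

variable {M : ℝ}

lemma pint_nonneg (hpos : ∀ x, 0 < ρ₀ x) (x y : ℝ) (hy : 0 < y) :
    0 ≤ ∫ s : ℝ, y / ((x - s) ^ 2 + y ^ 2) * ρ₀ s := by
  refine integral_nonneg fun s => ?_
  have h1 : (0:ℝ) < (x - s) ^ 2 + y ^ 2 := by positivity
  exact mul_nonneg (div_nonneg hy.le h1.le) (hpos s).le

lemma integrable_sub' (hc : Continuous ρ₀) (hbM : ∀ x, ρ₀ x ≤ M) (hpos : ∀ x, 0 < ρ₀ x)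
    (x y : ℝ) : Integrable (fun u : ℝ => ρ₀ (x - y * u) * (1 + u ^ 2)⁻¹) := by
  refine Integrable.mono' (integrable_inv_one_add_sq.const_mul M) ?_ ?_
  · exact ((hc.comp (continuous_const.sub (continuous_const.mul continuous_id))).mul
      ((continuous_const.add (continuous_pow 2)).inv₀ (fun u => (by positivity : (1:ℝ) + u ^ 2 ≠ 0)))).aestronglyMeasurable
  · filter_upwards with u
    have h1 : (0:ℝ) < 1 + u ^ 2 := by positivity
    rw [Real.norm_eq_abs, _root_.abs_of_nonneg (mul_nonneg (hpos _).le (by positivity))]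
    exact mul_le_mul_of_nonneg_right (hbM _) (by positivity)

lemma pint_le (hc : Continuous ρ₀) (hbM : ∀ x, ρ₀ x ≤ M) (hpos : ∀ x, 0 < ρ₀ x)
    (x y : ℝ) (hy : 0 < y) :
    ∫ s : ℝ, y / ((x - s) ^ 2 + y ^ 2) * ρ₀ s ≤ Real.pi * M := by
  rw [poisson_sub ρ₀ x y hy]
  have h2 : ∫ u : ℝ, M * (1 + u ^ 2)⁻¹ = Real.pi * M := by
    rw [integral_const_mul, integral_univ_inv_one_add_sq]; ring
  rw [← h2]
  refine integral_mono (integrable_sub' hc hbM hpos x y)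
    (integrable_inv_one_add_sq.const_mul M) fun u => ?_
  have h1 : (0:ℝ) < 1 + u ^ 2 := by positivity
  exact mul_le_mul_of_nonneg_right (hbM _) (by positivity)

lemma tendsto_pint (hc : Continuous ρ₀) (hbM : ∀ x, ρ₀ x ≤ M) (hpos : ∀ x, 0 < ρ₀ x)
    {x y : ℕ → ℝ} {xb : ℝ} (hx : Filter.Tendsto x Filter.atTop (nhds xb))
    (hy : Filter.Tendsto y Filter.atTop (nhds 0)) (hy' : ∀ n, 0 < y n) :
    Filter.Tendsto (fun n => ∫ s : ℝ, y n / ((x n - s) ^ 2 + (y n) ^ 2) * ρ₀ s)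
      Filter.atTop (nhds (Real.pi * ρ₀ xb)) := by
  have heq : ∀ n, ∫ s : ℝ, y n / ((x n - s) ^ 2 + (y n) ^ 2) * ρ₀ s
      = ∫ u : ℝ, ρ₀ (x n - y n * u) * (1 + u ^ 2)⁻¹ := fun n =>
    poisson_sub ρ₀ (x n) (y n) (hy' n)
  simp_rw [heq]
  have hlim : ∫ u : ℝ, ρ₀ xb * (1 + u ^ 2)⁻¹ = Real.pi * ρ₀ xb := by
    rw [integral_const_mul, integral_univ_inv_one_add_sq]; ring
  rw [← hlim]
  refine tendsto_integral_of_dominated_convergence (fun u => M * (1 + u ^ 2)⁻¹)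
    (fun n => ((hc.comp (continuous_const.sub (continuous_const.mul continuous_id))).mul
      ((continuous_const.add (continuous_pow 2)).inv₀ (fun u => (by positivity : (1:ℝ) + u ^ 2 ≠ 0)))).aestronglyMeasurable)
    (integrable_inv_one_add_sq.const_mul M) (fun n => ?_) ?_
  · filter_upwards with u
    have h1 : (0:ℝ) < 1 + u ^ 2 := by positivity
    rw [Real.norm_eq_abs, _root_.abs_of_nonneg (mul_nonneg (hpos _).le (by positivity))]
    exact mul_le_mul_of_nonneg_right (hbM _) (by positivity)
  · filter_upwards with u
    have harg : Filter.Tendsto (fun n => x n - y n * u) Filter.atTop (nhds xb) := by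
      simpa using hx.sub (hy.mul_const u)
    exact ((hc.tendsto xb).comp harg).mul_const _

/-! ### Holomorphy -/

lemma im_ball {w x : ℂ} (hw : 0 < w.im) (hx : x ∈ Metric.ball w (w.im / 2)) :
    w.im / 2 < x.im := by
  have h1 : ‖x - w‖ < w.im / 2 := by
    rw [← Complex.dist_eq]; exact hx
  have h2 := Complex.abs_im_le_norm (x - w)
  rw [Complex.sub_im] at h2
  have h3 : |x.im - w.im| < w.im / 2 := lt_of_le_of_lt h2 h1
  have := (abs_lt.mp h3).1
  linarith

lemma hasDerivAt_cau (hc : Continuous ρ₀) (hi : Integrable ρ₀) {w : ℂ} (hw : 0 < w.im) :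
    HasDerivAt (cau ρ₀) (∫ s : ℝ, (ρ₀ s : ℂ) * (-1 / (w - s) ^ 2)) w := by
  set F : ℂ → ℝ → ℂ := fun x s => (ρ₀ s : ℂ) / (x - s) with hF
  set F' : ℂ → ℝ → ℂ := fun x s => (ρ₀ s : ℂ) * (-1 / (x - s) ^ 2) with hF'
  have hε : 0 < w.im / 2 := by linarith
  have him : ∀ x ∈ Metric.ball w (w.im / 2), w.im / 2 < x.im := fun x hx => im_ball hw hx
  have key := hasDerivAt_integral_of_dominated_loc_of_deriv_le (F := F) (F' := F')
    (bound := fun s => ‖ρ₀ s‖ / (w.im / 2) ^ 2) (x₀ := w) (μ := volume) (Metric.ball_mem_nhds w hε) ?_ ?_ ?_ ?_ ?_ ?_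
  · exact key.2
  · filter_upwards [Metric.ball_mem_nhds w hε] with x hx
    exact (continuous_ker hc (hε.trans (him x hx))).aestronglyMeasurable
  · refine Integrable.mono' (hi.norm.div_const w.im) ((continuous_ker hc hw).aestronglyMeasurable) ?_
    filter_upwards with s
    rw [hF]
    exact norm_ker_le hw s
  · refine Continuous.aestronglyMeasurable ?_
    refine (Complex.continuous_ofReal.comp hc).mul ?_
    refine Continuous.div continuous_const ?_ ?_
    · exact (continuous_const.sub Complex.continuous_ofReal).pow 2
    · intro s
      exact pow_ne_zero 2 (sub_ne_zero_of_im hw s)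
  · filter_upwards with s x hx
    have hxim : 0 < x.im := hε.trans (him x hx)
    rw [hF']
    rw [norm_mul, Complex.norm_real, norm_div, norm_neg, norm_one, norm_pow]
    have h1 : (w.im / 2) ^ 2 ≤ ‖x - s‖ ^ 2 := by
      apply pow_le_pow_left₀ hε.le
      exact (him x hx).le.trans (norm_sub_ge x s)
    rw [mul_one_div]
    exact div_le_div_of_nonneg_left (norm_nonneg _) (by positivity) h1
  · exact hi.norm.div_const _
  · filter_upwards with s x hx
    have hxs : x - (s:ℂ) ≠ 0 := sub_ne_zero_of_im (hε.trans (him x hx)) s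
    have h1 : HasDerivAt (fun x : ℂ => x - (s:ℂ)) 1 x := (hasDerivAt_id x).sub_const _
    have h2 := h1.inv hxs
    have h3 := h2.const_mul (ρ₀ s : ℂ)
    have h4 : (fun x => F x s) = fun y => (ρ₀ s : ℂ) * (fun x : ℂ => x - (s:ℂ))⁻¹ y := by
      funext z; simp [hF, div_eq_mul_inv]
    rw [h4]; exact h3


/-! ### Components of the characteristic map -/

lemma Zm_re {a c : ℝ} {w : ℂ} (hki : Integrable (fun s : ℝ => (ρ₀ s : ℂ) / (w - s)))
    (hw : 0 < w.im) :
    (Zm ρ₀ a c w).re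
      = a * w.re + c * ∫ s : ℝ, (w.re - s) / ((w.re - s) ^ 2 + w.im ^ 2) * ρ₀ s := by
  rw [Zm]
  simp [Complex.add_re, Complex.mul_re, cau_re hki hw]

lemma Zm_im {a c : ℝ} {w : ℂ} (hki : Integrable (fun s : ℝ => (ρ₀ s : ℂ) / (w - s)))
    (hw : 0 < w.im) :
    (Zm ρ₀ a c w).im
      = a * w.im - c * ∫ s : ℝ, w.im / ((w.re - s) ^ 2 + w.im ^ 2) * ρ₀ s := by
  rw [Zm]
  simp [Complex.add_im, Complex.mul_im, cau_im hki hw]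
  ring

/-- Integrability of `ρ₀ s / |w - s|²`. -/
lemma integrable_ker2 (hc : Continuous ρ₀) (hi : Integrable ρ₀) {w : ℂ} (hw : 0 < w.im) :
    Integrable (fun s : ℝ => ρ₀ s * ((w.re - s) ^ 2 + w.im ^ 2)⁻¹) := by
  have hd : ∀ s : ℝ, (0:ℝ) < (w.re - s) ^ 2 + w.im ^ 2 := fun s => by positivity
  refine Integrable.mono' (hi.norm.div_const (w.im ^ 2))
    ((hc.mul ((((continuous_const.sub continuous_id).pow 2).add continuous_const).inv₀
      (fun s => (hd s).ne'))).aestronglyMeasurable) ?_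
  filter_upwards with s
  have hd2 : w.im ^ 2 ≤ (w.re - s) ^ 2 + w.im ^ 2 := by nlinarith [sq_nonneg (w.re - s)]
  have him2 : (0:ℝ) < w.im ^ 2 := by positivity
  rw [Real.norm_eq_abs, Real.norm_eq_abs, abs_mul, abs_inv, _root_.abs_of_pos (hd s),
    div_eq_mul_inv]
  exact mul_le_mul_of_nonneg_left (inv_anti₀ him2 hd2) (abs_nonneg _)

/-! ### Uniqueness -/

lemma pull_y (x y : ℝ) : ∫ s : ℝ, y / ((x - s) ^ 2 + y ^ 2) * ρ₀ s
    = y * ∫ s : ℝ, ρ₀ s * ((x - s) ^ 2 + y ^ 2)⁻¹ := by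
  rw [← integral_const_mul]
  congr 1; ext s; field_simp

lemma abs_sq_eq (w : ℂ) (s : ℝ) :
    (w.re - s) ^ 2 + w.im ^ 2 = ‖w - s‖ ^ 2 := by
  rw [Complex.sq_norm, Complex.normSq_apply]
  simp [Complex.sub_re, Complex.sub_im]
  ring

lemma uniq (hc : Continuous ρ₀) (hi : Integrable ρ₀) (hpos : ∀ x, 0 < ρ₀ x)
    {a c : ℝ} (ha : 0 < a) (hcp : 0 < c) {w₁ w₂ : ℂ}
    (h1 : 0 < w₁.im) (h2 : 0 < w₂.im) (heq : Zm ρ₀ a c w₁ = Zm ρ₀ a c w₂)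
    (him : 0 ≤ (Zm ρ₀ a c w₁).im) : w₁ = w₂ := by
  by_contra hne
  have hk1 := integrable_ker hc hi h1
  have hk2 := integrable_ker hc hi h2
  set g : ℝ → ℂ := fun s => (ρ₀ s : ℂ) / ((w₁ - s) * (w₂ - s)) with hg
  have hr1pos : ∀ s : ℝ, 0 < ‖w₁ - s‖ := fun s => lt_of_lt_of_le h1 (norm_sub_ge _ s)
  have hr2pos : ∀ s : ℝ, 0 < ‖w₂ - s‖ := fun s => lt_of_lt_of_le h2 (norm_sub_ge _ s)
  have hcontg : Continuous g := by
    apply Continuous.div (Complex.continuous_ofReal.comp hc)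
    · exact (continuous_const.sub Complex.continuous_ofReal).mul
        (continuous_const.sub Complex.continuous_ofReal)
    · exact fun s => mul_ne_zero (sub_ne_zero_of_im h1 s) (sub_ne_zero_of_im h2 s)
  have hnorm_g : ∀ s : ℝ, ‖g s‖
      = ρ₀ s * (‖w₁ - s‖ * ‖w₂ - s‖)⁻¹ := by
    intro s
    rw [hg]
    rw [norm_div, Complex.norm_real, Real.norm_eq_abs, _root_.abs_of_pos (hpos s),
      norm_mul, div_eq_mul_inv]
  have hgi : Integrable g := by
    refine Integrable.mono' (hi.norm.div_const (w₁.im * w₂.im)) hcontg.aestronglyMeasurable ?_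
    filter_upwards with s
    rw [hnorm_g s, Real.norm_eq_abs, div_eq_mul_inv, _root_.abs_of_pos (hpos s)]
    refine mul_le_mul_of_nonneg_left ?_ (hpos s).le
    refine inv_anti₀ (by positivity) ?_
    exact mul_le_mul (norm_sub_ge _ s) (norm_sub_ge _ s) h2.le (norm_nonneg _)
  set I2 : ℂ := ∫ s : ℝ, g s with hI2def
  have hsub : cau ρ₀ w₁ - cau ρ₀ w₂ = (w₂ - w₁) * I2 := by
    rw [cau, cau, ← integral_sub hk1 hk2, hI2def, ← integral_const_mul]
    refine integral_congr_ae (Filter.Eventually.of_forall fun s => ?_)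
    have e1 : w₁ - (s:ℂ) ≠ 0 := sub_ne_zero_of_im h1 s
    have e2 : w₂ - (s:ℂ) ≠ 0 := sub_ne_zero_of_im h2 s
    show (ρ₀ s : ℂ) / (w₁ - s) - (ρ₀ s : ℂ) / (w₂ - s)
      = (w₂ - w₁) * ((ρ₀ s : ℂ) / ((w₁ - s) * (w₂ - s)))
    field_simp
    ring
  have heq' : (a:ℂ) * w₁ + (c:ℂ) * cau ρ₀ w₁ = (a:ℂ) * w₂ + (c:ℂ) * cau ρ₀ w₂ := by
    have h := heq
    simp only [Zm] at h
    exact h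
  have hfac : (w₁ - w₂) * ((a:ℂ) - (c:ℂ) * I2) = 0 := by
    have h' : (c:ℂ) * (cau ρ₀ w₁ - cau ρ₀ w₂) = -((a:ℂ) * (w₁ - w₂)) := by
      linear_combination heq'
    rw [hsub] at h'
    linear_combination h'
  have hcI2 : (c:ℂ) * I2 = (a:ℂ) := by
    rcases mul_eq_zero.mp hfac with h | h
    · exact absurd (sub_eq_zero.mp h) hne
    · have := sub_eq_zero.mp h
      linear_combination -this
  have hnI2 : ‖I2‖ = a / c := by
    have h' : ‖(c:ℂ) * I2‖ = ‖(a:ℂ)‖ := by rw [hcI2]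
    rw [norm_mul, Complex.norm_real, Complex.norm_real, Real.norm_eq_abs, Real.norm_eq_abs,
      _root_.abs_of_pos hcp, _root_.abs_of_pos ha] at h'
    rw [eq_div_iff hcp.ne']
    linarith [h']
  -- the energies
  set f₁ : ℝ → ℝ := fun s => ρ₀ s * ((w₁.re - s) ^ 2 + w₁.im ^ 2)⁻¹ with hf₁
  set f₂ : ℝ → ℝ := fun s => ρ₀ s * ((w₂.re - s) ^ 2 + w₂.im ^ 2)⁻¹ with hf₂
  have hEi1 : Integrable f₁ := integrable_ker2 hc hi h1
  have hEi2 : Integrable f₂ := integrable_ker2 hc hi h2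
  have hadd : Integrable (fun s : ℝ => f₁ s + f₂ s) := hEi1.add hEi2
  set E₁ : ℝ := ∫ s : ℝ, f₁ s with hE₁def
  set E₂ : ℝ := ∫ s : ℝ, f₂ s with hE₂def
  have hZim1 : (Zm ρ₀ a c w₁).im = a * w₁.im - c * (w₁.im * E₁) := by
    rw [Zm_im hk1 h1, pull_y]
  have hZim2 : (Zm ρ₀ a c w₂).im = a * w₂.im - c * (w₂.im * E₂) := by
    rw [Zm_im hk2 h2, pull_y]
  have hE1 : E₁ ≤ a / c := by
    rw [hZim1] at him
    rw [le_div_iff₀ hcp]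
    nlinarith [him, h1]
  have hE2 : E₂ ≤ a / c := by
    have him2 : 0 ≤ (Zm ρ₀ a c w₂).im := heq ▸ him
    rw [hZim2] at him2
    rw [le_div_iff₀ hcp]
    nlinarith [him2, h2]
  -- AM-GM pointwise bound
  have hAM : ∀ s : ℝ, ‖g s‖ ≤ (f₁ s + f₂ s) / 2 := by
    intro s
    set r₁ := ‖w₁ - s‖ with hr₁
    set r₂ := ‖w₂ - s‖ with hr₂
    have p1 := hr1pos s
    have p2 := hr2pos s
    rw [hnorm_g s, hf₁, hf₂]
    simp only [abs_sq_eq, ← hr₁, ← hr₂]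
    have key : (r₁ * r₂)⁻¹ ≤ ((r₁ ^ 2)⁻¹ + (r₂ ^ 2)⁻¹) / 2 := by
      rw [mul_inv, pow_two, pow_two, mul_inv, mul_inv]
      nlinarith [sq_nonneg (r₁⁻¹ - r₂⁻¹)]
    calc ρ₀ s * (r₁ * r₂)⁻¹ ≤ ρ₀ s * (((r₁ ^ 2)⁻¹ + (r₂ ^ 2)⁻¹) / 2) :=
          mul_le_mul_of_nonneg_left key (hpos s).le
      _ = (ρ₀ s * (r₁ ^ 2)⁻¹ + ρ₀ s * (r₂ ^ 2)⁻¹) / 2 := by ring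
  -- the chain of inequalities is tight
  have hchain1 : a / c ≤ ∫ s : ℝ, ‖g s‖ := by
    rw [← hnI2]
    exact norm_integral_le_integral_norm g
  have hchain2 : ∫ s : ℝ, ‖g s‖ ≤ (E₁ + E₂) / 2 := by
    have : ∫ s : ℝ, (f₁ s + f₂ s) / 2 = (E₁ + E₂) / 2 := by
      rw [integral_div, integral_add hEi1 hEi2]
    rw [← this]
    exact integral_mono hgi.norm (hadd.div_const 2) hAM
  have hzero_int : ∫ s : ℝ, ((f₁ s + f₂ s) / 2 - ‖g s‖) = 0 := by
    rw [integral_sub (hadd.div_const 2) hgi.norm]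
    have : ∫ s : ℝ, (f₁ s + f₂ s) / 2 = (E₁ + E₂) / 2 := by
      rw [integral_div, integral_add hEi1 hEi2]
    rw [this]
    linarith [hchain1, hchain2, hE1, hE2]
  have hnn : 0 ≤ fun s : ℝ => (f₁ s + f₂ s) / 2 - ‖g s‖ := fun s => by
    simp only [Pi.zero_apply]
    linarith [hAM s]
  have hint : Integrable (fun s : ℝ => (f₁ s + f₂ s) / 2 - ‖g s‖) :=
    (hadd.div_const 2).sub hgi.norm
  have hae := (integral_eq_zero_iff_of_nonneg hnn hint).mp hzero_int
  have hd1 : Continuous fun s : ℝ => ((w₁.re - s) ^ 2 + w₁.im ^ 2)⁻¹ :=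
    (((continuous_const.sub continuous_id).pow 2).add continuous_const).inv₀
      (fun s => (ne_of_gt (by nlinarith [sq_nonneg (w₁.re - s), mul_pos h1 h1]) : (w₁.re - s) ^ 2 + w₁.im ^ 2 ≠ 0))
  have hd2 : Continuous fun s : ℝ => ((w₂.re - s) ^ 2 + w₂.im ^ 2)⁻¹ :=
    (((continuous_const.sub continuous_id).pow 2).add continuous_const).inv₀
      (fun s => (ne_of_gt (by nlinarith [sq_nonneg (w₂.re - s), mul_pos h2 h2]) : (w₂.re - s) ^ 2 + w₂.im ^ 2 ≠ 0))
  have hcont : Continuous fun s : ℝ => (f₁ s + f₂ s) / 2 - ‖g s‖ :=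
    (((hc.mul hd1).add (hc.mul hd2)).div_const 2).sub hcontg.norm
  have hzero : ∀ s : ℝ, (f₁ s + f₂ s) / 2 - ‖g s‖ = 0 := by
    have h' := (hcont.ae_eq_iff_eq volume continuous_const).mp hae
    exact fun s => congrFun h' s
  -- deduce |w₁ - s| = |w₂ - s| for all s
  have hr : ∀ s : ℝ, (w₁.re - s) ^ 2 + w₁.im ^ 2 = (w₂.re - s) ^ 2 + w₂.im ^ 2 := by
    intro s
    set r₁ := ‖w₁ - s‖ with hr₁
    set r₂ := ‖w₂ - s‖ with hr₂
    have p1 := hr1pos s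
    have p2 := hr2pos s
    have h0 := hzero s
    rw [hnorm_g s, hf₁, hf₂] at h0
    simp only [abs_sq_eq, ← hr₁, ← hr₂] at h0
    have hexp : ρ₀ s * (r₁⁻¹ - r₂⁻¹) ^ 2 = 0 := by
      rw [mul_inv, pow_two, pow_two, mul_inv, mul_inv] at h0
      linear_combination 2 * h0
    have hinv : (r₁⁻¹ - r₂⁻¹) ^ 2 = 0 := by
      rcases mul_eq_zero.mp hexp with h | h
      · exact absurd h (hpos s).ne'
      · exact h
    have : r₁⁻¹ = r₂⁻¹ := sub_eq_zero.mp (pow_eq_zero_iff two_ne_zero |>.mp hinv)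
    have hr12 : r₁ = r₂ := inv_injective this
    rw [abs_sq_eq, abs_sq_eq, ← hr₁, ← hr₂, hr12]
  have e0 := hr 0
  have e1 := hr 1
  have hx : w₁.re = w₂.re := by linear_combination (e0 - e1) / 2
  have hysq : (w₁.im - w₂.im) * (w₁.im + w₂.im) = 0 := by
    linear_combination e0 - (w₁.re + w₂.re) * hx
  have hy : w₁.im = w₂.im := by
    rcases mul_eq_zero.mp hysq with h | h
    · exact sub_eq_zero.mp h
    · linarith
  exact hne (Complex.ext hx hy)

/-! ### Surjectivity -/

lemma cau_bound (hpos : ∀ x, 0 < ρ₀ x) (hbM : ∀ x, ρ₀ x ≤ M) (hc : Continuous ρ₀)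
    (hi : Integrable ρ₀) {MR : ℝ}
    (hMR : ∀ x y : ℝ, 0 < y →
      |(1 / Real.pi) * ∫ s : ℝ, (x - s) / ((x - s) ^ 2 + y ^ 2) * ρ₀ s| ≤ MR)
    {w : ℂ} (hw : 0 < w.im) : ‖cau ρ₀ w‖ ≤ Real.pi * MR + Real.pi * M := by
  have hki := integrable_ker hc hi hw
  have hre : |(cau ρ₀ w).re| ≤ Real.pi * MR := by
    rw [cau_re hki hw]
    have h := hMR w.re w.im hw
    rw [abs_mul, _root_.abs_of_pos (one_div_pos.mpr Real.pi_pos)] at h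
    calc |∫ s : ℝ, (w.re - s) / ((w.re - s) ^ 2 + w.im ^ 2) * ρ₀ s|
        = Real.pi * ((1 / Real.pi) * |∫ s : ℝ, (w.re - s) / ((w.re - s) ^ 2 + w.im ^ 2) * ρ₀ s|) := by
          field_simp
      _ ≤ Real.pi * MR := by
          refine mul_le_mul_of_nonneg_left ?_ Real.pi_pos.le
          exact h
  have him : |(cau ρ₀ w).im| ≤ Real.pi * M := by
    rw [cau_im hki hw, abs_neg,
      _root_.abs_of_nonneg (pint_nonneg hpos w.re w.im hw)]
    exact pint_le hc hbM hpos w.re w.im hw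
  calc ‖cau ρ₀ w‖ ≤ |(cau ρ₀ w).re| + |(cau ρ₀ w).im| := by
        exact Complex.norm_le_abs_re_add_abs_im _
    _ ≤ Real.pi * MR + Real.pi * M := add_le_add hre him

lemma surj (hc : Continuous ρ₀) (hi : Integrable ρ₀) (hpos : ∀ x, 0 < ρ₀ x)
    (hbM : ∀ x, ρ₀ x ≤ M) {K : ℝ}
    (hK : ∀ w : ℂ, 0 < w.im → ‖cau ρ₀ w‖ ≤ K)
    {a c : ℝ} (ha : 0 < a) (hcp : 0 < c) :
    ∀ z : ℂ, 0 ≤ z.im → ∃ w : ℂ, 0 < w.im ∧ Zm ρ₀ a c w = z := by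
  have hMpos : 0 < M := lt_of_lt_of_le (hpos 0) (hbM 0)
  set Z := Zm ρ₀ a c with hZdef
  set U : Set ℂ := {w : ℂ | 0 < w.im} with hUdef
  have hUmem : ∀ w : ℂ, w ∈ U ↔ 0 < w.im := fun w => Iff.rfl
  have hUopen : IsOpen U := isOpen_lt continuous_const Complex.continuous_im
  have hUconn : IsPreconnected U := (convex_halfSpace_im_gt 0).isPreconnected
  have hdiff : ∀ w ∈ U, DifferentiableAt ℂ Z w := by
    intro w hw
    have h1 : DifferentiableAt ℂ (fun w : ℂ => (a:ℂ) * w) w :=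
      (differentiableAt_id.const_mul _)
    have h2 : DifferentiableAt ℂ (cau ρ₀) w := (hasDerivAt_cau hc hi hw).differentiableAt
    exact h1.add (h2.const_mul _)
  have hZim : ∀ w : ℂ, 0 < w.im →
      (Z w).im = a * w.im - c * ∫ s : ℝ, w.im / ((w.re - s) ^ 2 + w.im ^ 2) * ρ₀ s :=
    fun w hw => Zm_im (integrable_ker hc hi hw) hw
  -- imaginary part along the imaginary axis
  have hIm_t : ∀ t : ℝ, 0 < t →
      a * t - c * (Real.pi * M) ≤ (Z ((t:ℂ) * Complex.I)).im ∧
        (Z ((t:ℂ) * Complex.I)).im ≤ a * t := by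
    intro t ht
    have him : ((t:ℂ) * Complex.I).im = t := by simp
    have hre : ((t:ℂ) * Complex.I).re = 0 := by simp
    have hU' : 0 < ((t:ℂ) * Complex.I).im := by simpa [him] using ht
    have h := hZim _ hU'
    rw [him, hre] at h
    have hub := pint_le hc hbM hpos 0 t ht
    have hlb := pint_nonneg hpos 0 t ht
    constructor
    · rw [h]
      have := mul_le_mul_of_nonneg_left hub hcp.le
      linarith
    · rw [h]
      have := mul_le_mul_of_nonneg_left hlb hcp.le
      linarith
  -- nonconstancy
  have hnc : ¬ ∃ v, ∀ w ∈ U, Z w = v := by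
    rintro ⟨v, hv⟩
    set t₂ : ℝ := (a + c * (Real.pi * M) + 1) / a with ht₂def
    have hcM : 0 ≤ c * (Real.pi * M) := by positivity
    have ht₂pos : 0 < t₂ := by positivity
    have h1 : ((1:ℝ):ℂ) * Complex.I ∈ U := by simp [hUmem]
    have h2 : ((t₂:ℝ):ℂ) * Complex.I ∈ U := by simp [hUmem, ht₂pos]
    have e1 := (hIm_t 1 one_pos).2
    have e2 := (hIm_t t₂ ht₂pos).1
    rw [hv _ h1] at e1
    rw [hv _ h2] at e2
    have : a * t₂ = a + c * (Real.pi * M) + 1 := by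
      rw [ht₂def]; field_simp
    rw [this] at e2
    linarith
  -- open image
  have hanal : AnalyticOnNhd ℂ Z U :=
    (DifferentiableOn.analyticOnNhd
      (fun w hw => (hdiff w hw).differentiableWithinAt) hUopen)
  have hopen : IsOpen (Z '' U) := by
    rcases hanal.is_constant_or_isOpen hUconn with ⟨v, hv⟩ | h
    · exact absurd ⟨v, hv⟩ hnc
    · exact h U (subset_refl U) hUopen
  -- a point of the image with nonnegative imaginary part
  have hmemT : ∃ w₀ ∈ U, 0 ≤ (Z w₀).im := by
    set t₀ : ℝ := (c * (Real.pi * M) + 1) / a with ht₀def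
    have hcM : 0 ≤ c * (Real.pi * M) := by positivity
    have ht₀pos : 0 < t₀ := by positivity
    refine ⟨((t₀:ℝ):ℂ) * Complex.I, by simp [hUmem, ht₀pos], ?_⟩
    have := (hIm_t t₀ ht₀pos).1
    have h' : a * t₀ = c * (Real.pi * M) + 1 := by rw [ht₀def]; field_simp
    rw [h'] at this
    linarith
  -- connectedness argument on the closed upper half plane
  set Cs : Set ℂ := {z : ℂ | 0 ≤ z.im} with hCsdef
  have hCconn : IsPreconnected Cs := (convex_halfSpace_im_ge 0).isPreconnected
  haveI : PreconnectedSpace Cs := Subtype.preconnectedSpace hCconn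
  set S : Set Cs := {z : Cs | (z : ℂ) ∈ Z '' U} with hSdef
  have hSopen : IsOpen S := hopen.preimage continuous_subtype_val
  have hSclosed : IsClosed S := by
    refine IsSeqClosed.isClosed ?_
    intro f p hf hfp
    set ζ : ℕ → ℂ := fun n => (f n : ℂ) with hζdef
    have hζp : Filter.Tendsto ζ Filter.atTop (nhds (p : ℂ)) :=
      (continuous_subtype_val.tendsto p).comp hfp
    have hex : ∀ n, ∃ w, w ∈ U ∧ Z w = ζ n := by
      intro n
      rcases hf n with ⟨w, hw, hwz⟩
      exact ⟨w, hw, hwz⟩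
    choose w hwU hwZ using hex
    obtain ⟨B, hB⟩ : ∃ B : ℝ, ∀ n, ‖ζ n‖ ≤ B := by
      have hcomp : IsCompact (insert (p : ℂ) (Set.range ζ)) := hζp.isCompact_insert_range
      obtain ⟨B, hB⟩ := hcomp.isBounded.subset_closedBall 0
      exact ⟨B, fun n => by
        have := hB (Set.mem_insert_of_mem _ ⟨n, rfl⟩)
        rwa [Metric.mem_closedBall, dist_zero_right] at this⟩
    have hwb : ∀ n, ‖w n‖ ≤ (B + c * K) / a := by
      intro n
      have h1 : (a:ℂ) * w n = Z (w n) - (c:ℂ) * cau ρ₀ (w n) := by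
        rw [hZdef, Zm]; ring
    -- a * ‖w n‖ ≤ B + c*K
      have h2 : a * ‖w n‖ ≤ B + c * K := by
        calc a * ‖w n‖ = ‖(a:ℂ) * w n‖ := by
              rw [norm_mul, Complex.norm_real, Real.norm_eq_abs, _root_.abs_of_pos ha]
          _ = ‖Z (w n) - (c:ℂ) * cau ρ₀ (w n)‖ := by rw [h1]
          _ ≤ ‖Z (w n)‖ + ‖(c:ℂ) * cau ρ₀ (w n)‖ := norm_sub_le _ _
          _ ≤ B + c * K := by
              refine add_le_add ?_ ?_
              · rw [hwZ n]; exact hB n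
              · rw [norm_mul, Complex.norm_real, Real.norm_eq_abs, _root_.abs_of_pos hcp]
                exact mul_le_mul_of_nonneg_left (hK _ (hwU n)) hcp.le
      rw [le_div_iff₀ ha]
      linarith
    obtain ⟨wb, hwbmem, φ, hφ, hconv⟩ :=
      tendsto_subseq_of_bounded (Metric.isBounded_closedBall (x := (0:ℂ)) (r := (B + c*K)/a))
        (fun n => by rw [Metric.mem_closedBall, dist_zero_right]; exact hwb n)
    have hζφ : Filter.Tendsto (fun k => ζ (φ k)) Filter.atTop (nhds (p : ℂ)) :=
      hζp.comp hφ.tendsto_atTop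
    have hwim : Filter.Tendsto (fun k => (w (φ k)).im) Filter.atTop (nhds wb.im) :=
      (Complex.continuous_im.tendsto wb).comp hconv
    have hwim0 : 0 ≤ wb.im :=
      ge_of_tendsto hwim (Filter.Eventually.of_forall fun k => (hwU (φ k)).le)
    rcases eq_or_lt_of_le hwim0 with h0 | hposim
    · -- boundary contradiction
      exfalso
      have hx : Filter.Tendsto (fun k => (w (φ k)).re) Filter.atTop (nhds wb.re) :=
        (Complex.continuous_re.tendsto wb).comp hconv
      have hy : Filter.Tendsto (fun k => (w (φ k)).im) Filter.atTop (nhds 0) := by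
        rw [h0]; exact hwim
      have hP := tendsto_pint hc hbM hpos hx hy (fun k => hwU (φ k))
      have hIm : Filter.Tendsto (fun k => (Z (w (φ k))).im) Filter.atTop
          (nhds (a * 0 - c * (Real.pi * ρ₀ wb.re))) := by
        have heqk : (fun k => (Z (w (φ k))).im)
            = fun k => a * (w (φ k)).im -
              c * ∫ s : ℝ, (w (φ k)).im / (((w (φ k)).re - s) ^ 2 + ((w (φ k)).im) ^ 2) * ρ₀ s :=
          funext fun k => hZim _ (hwU (φ k))
        rw [heqk]
        exact (hy.const_mul a).sub (hP.const_mul c)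
      have heqseq : (fun k => (Z (w (φ k))).im) = fun k => (ζ (φ k)).im :=
        funext fun k => by rw [hwZ]
      rw [heqseq] at hIm
      have hIm' : Filter.Tendsto (fun k => (ζ (φ k)).im) Filter.atTop (nhds (p : ℂ).im) :=
        (Complex.continuous_im.tendsto _).comp hζφ
      have hlim := tendsto_nhds_unique hIm hIm'
      have hppos : 0 ≤ (p : ℂ).im := p.2
      have hρpos : (0:ℝ) < Real.pi * ρ₀ wb.re := mul_pos Real.pi_pos (hpos _)
      have : a * 0 - c * (Real.pi * ρ₀ wb.re) < 0 := by nlinarith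
      linarith [hlim ▸ hppos]
    · -- interior case
      have hwbU : wb ∈ U := hposim
      have h1 : Filter.Tendsto (fun k => Z (w (φ k))) Filter.atTop (nhds (Z wb)) :=
        ((hdiff wb hwbU).continuousAt.tendsto).comp hconv
      have h2 : (fun k => Z (w (φ k))) = fun k => ζ (φ k) := funext fun k => hwZ (φ k)
      rw [h2] at h1
      have := tendsto_nhds_unique h1 hζφ
      exact ⟨wb, hwbU, this⟩
  obtain ⟨w₀, hw₀U, hw₀im⟩ := hmemT
  have hSne : S.Nonempty := ⟨⟨Z w₀, hw₀im⟩, ⟨w₀, hw₀U, rfl⟩⟩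
  have hSuniv : S = Set.univ := IsClopen.eq_univ ⟨hSclosed, hSopen⟩ hSne
  intro z hz
  have hmem : (⟨z, hz⟩ : Cs) ∈ S := by rw [hSuniv]; exact Set.mem_univ _
  rcases hmem with ⟨w, hwU, hwz⟩
  exact ⟨w, hwU, hwz⟩

end Stmt19Aux

open MeasureTheory

/-- Invertibility of the forward characteristic map of the complex Burgers equation with
force: for every point `(Z₁, Z₂)` in the closed upper half plane there exists a unique
`(x, y)` in the open upper half plane with `Z₁ = ax + bRρ₀(x,y)`, `Z₂ = ay - bPρ₀(x,y)`,
where `P`, `R` are the Poisson and conjugate Poisson extensions, `a = e^{-γt₀}` and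
`b = (π/γ)sinh(γt₀)`. -/
theorem stmt19 (ρ₀ : ℝ → ℝ) (hc : Continuous ρ₀)
    (hb : ∃ M : ℝ, ∀ x : ℝ, ρ₀ x ≤ M)
    (hi : Integrable ρ₀) (hpos : ∀ x : ℝ, 0 < ρ₀ x)
    (hRb : ∃ M : ℝ, ∀ x y : ℝ, 0 < y →
      |(1 / Real.pi) * ∫ s : ℝ, (x - s) / ((x - s) ^ 2 + y ^ 2) * ρ₀ s| ≤ M)
    (γ t₀ : ℝ) (hγ : 0 < γ) (ht₀ : 0 < t₀) :
    ∀ Z₁ Z₂ : ℝ, 0 ≤ Z₂ →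
      ∃! p : ℝ × ℝ, 0 < p.2 ∧
        Z₁ = Real.exp (-(γ * t₀)) * p.1 +
          (Real.pi / γ) * Real.sinh (γ * t₀) *
            ((1 / Real.pi) * ∫ s : ℝ, (p.1 - s) / ((p.1 - s) ^ 2 + p.2 ^ 2) * ρ₀ s) ∧
        Z₂ = Real.exp (-(γ * t₀)) * p.2 -
          (Real.pi / γ) * Real.sinh (γ * t₀) *
            ((1 / Real.pi) * ∫ s : ℝ, p.2 / ((p.1 - s) ^ 2 + p.2 ^ 2) * ρ₀ s) := by
  intro Z₁ Z₂ hZ₂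
  obtain ⟨M₀, hM₀⟩ := hb
  obtain ⟨MR, hMR⟩ := hRb
  set a : ℝ := Real.exp (-(γ * t₀)) with hadef
  set cc : ℝ := Real.sinh (γ * t₀) / γ with hccdef
  have ha : 0 < a := Real.exp_pos _
  have hcc : 0 < cc := div_pos (Real.sinh_pos_iff.mpr (mul_pos hγ ht₀)) hγ
  have hK : ∀ w : ℂ, 0 < w.im → ‖Stmt19Aux.cau ρ₀ w‖ ≤ Real.pi * MR + Real.pi * M₀ :=
    fun w hw => Stmt19Aux.cau_bound hpos hM₀ hc hi hMR hw
  have hcoef : ∀ r : ℝ,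
      Real.pi / γ * Real.sinh (γ * t₀) * (1 / Real.pi * r) = cc * r := by
    intro r
    rw [hccdef]
    field_simp
  have hiff : ∀ p : ℝ × ℝ, 0 < p.2 →
      ((Z₁ = a * p.1 + Real.pi / γ * Real.sinh (γ * t₀) *
          (1 / Real.pi * ∫ s : ℝ, (p.1 - s) / ((p.1 - s) ^ 2 + p.2 ^ 2) * ρ₀ s) ∧
        Z₂ = a * p.2 - Real.pi / γ * Real.sinh (γ * t₀) *
          (1 / Real.pi * ∫ s : ℝ, p.2 / ((p.1 - s) ^ 2 + p.2 ^ 2) * ρ₀ s))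
       ↔ Stmt19Aux.Zm ρ₀ a cc (⟨p.1, p.2⟩ : ℂ) = (⟨Z₁, Z₂⟩ : ℂ)) := by
    intro p hp2
    have hwim : 0 < ((⟨p.1, p.2⟩ : ℂ)).im := hp2
    have hki := Stmt19Aux.integrable_ker hc hi hwim
    rw [Complex.ext_iff]
    rw [Stmt19Aux.Zm_re hki hwim, Stmt19Aux.Zm_im hki hwim]
    rw [hcoef, hcoef]
    exact ⟨fun ⟨u, v⟩ => ⟨u.symm, v.symm⟩, fun ⟨u, v⟩ => ⟨u.symm, v.symm⟩⟩
  obtain ⟨w, hwim, hwz⟩ :=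
    Stmt19Aux.surj hc hi hpos hM₀ hK ha hcc (⟨Z₁, Z₂⟩ : ℂ) hZ₂
  refine ⟨(w.re, w.im), ⟨hwim, ?_⟩, ?_⟩
  · exact (hiff (w.re, w.im) hwim).mpr hwz
  · rintro q ⟨hq2, hqa, hqb⟩
    have hq : Stmt19Aux.Zm ρ₀ a cc (⟨q.1, q.2⟩ : ℂ) = (⟨Z₁, Z₂⟩ : ℂ) :=
      (hiff q hq2).mp ⟨hqa, hqb⟩
    have hp : Stmt19Aux.Zm ρ₀ a cc (⟨w.re, w.im⟩ : ℂ) = (⟨Z₁, Z₂⟩ : ℂ) := hwz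
    have heq : Stmt19Aux.Zm ρ₀ a cc (⟨q.1, q.2⟩ : ℂ)
        = Stmt19Aux.Zm ρ₀ a cc (⟨w.re, w.im⟩ : ℂ) := by rw [hq, hp]
    have him : 0 ≤ (Stmt19Aux.Zm ρ₀ a cc (⟨q.1, q.2⟩ : ℂ)).im := by
      rw [hq]; exact hZ₂
    have := Stmt19Aux.uniq hc hi hpos ha hcc hq2 hwim heq him
    have h1 : q.1 = w.re := congrArg Complex.re this
    have h2 : q.2 = w.im := congrArg Complex.im this
    exact Prod.ext h1 h2
end
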